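/- arXiv:1509.07631 — 10 statements merged into one kernel-verified Lean document; each statement's English description precedes it below -/
import Mathlib

section
/- For all positive reals x and y, (x - y)(log x - log y) ≥ (√x - √y)². -/
theorem log_diff_ge_sqrt_diff_sq (x y : ℝ) (hx : 0 < x) (hy : 0 < y) :
    (Real.sqrt x - Real.sqrt y) ^ 2 ≤ (x - y) * (Real.log x - Real.log y) := by
  wlog hxy : y ≤ x with H
  · have h := H y x hy hx (le_of_not_ge hxy)
    have e1 : (Real.sqrt x - Real.sqrt y) ^ 2 = (Real.sqrt y - Real.sqrt x) ^ 2 := by ring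
    have e2 : (x - y) * (Real.log x - Real.log y)
        = (y - x) * (Real.log y - Real.log x) := by ring
    rw [e1, e2]; exact h
  have hsx := Real.sq_sqrt hx.le
  have hsy := Real.sq_sqrt hy.le
  have hlog : (x - y) / x ≤ Real.log x - Real.log y := by
    have h := Real.log_le_sub_one_of_pos (div_pos hy hx)
    rw [Real.log_div hy.ne' hx.ne'] at h
    have e : (x - y) / x = 1 - y / x := by field_simp
    linarith [e.le]
  have key : (Real.sqrt x - Real.sqrt y) ^ 2 * x ≤ (x - y) ^ 2 := by
    nlinarith [Real.sqrt_nonneg x, Real.sqrt_nonneg y, hsx, hsy,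
      mul_nonneg (Real.sqrt_nonneg x) (Real.sqrt_nonneg y),
      sq_nonneg (Real.sqrt x - Real.sqrt y)]
  have h3 : (Real.sqrt x - Real.sqrt y) ^ 2 ≤ (x - y) ^ 2 / x := (le_div_iff₀ hx).2 key
  have h5 : (x - y) * ((x - y) / x) ≤ (x - y) * (Real.log x - Real.log y) :=
    mul_le_mul_of_nonneg_left hlog (sub_nonneg.2 hxy)
  have h4 : (x - y) ^ 2 / x = (x - y) * ((x - y) / x) := by ring
  linarith [h4.le]
end

section
/- For all real t ≥ 3/2, one has (1/3)·(t/log t) ≤ Ψ⁻¹(t) ≤ 2·(t/log t), where Ψ(x) = |x|·log(1+|x|) and Ψ⁻¹ is the inverse of Ψ restricted to [0,∞). -/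
lemma psi_mono_aux {x y : ℝ} (hx : 0 ≤ x) (hxy : x < y) :
    x * Real.log (1 + x) < y * Real.log (1 + y) := by
  have hly : 0 < Real.log (1 + y) := Real.log_pos (by linarith)
  have h1 : Real.log (1 + x) ≤ Real.log (1 + y) :=
    Real.log_le_log (by linarith) (by linarith)
  calc x * Real.log (1 + x) ≤ x * Real.log (1 + y) :=
        mul_le_mul_of_nonneg_left h1 hx
    _ < y * Real.log (1 + y) := mul_lt_mul_of_pos_right hxy hly

lemma log_three_halves : (1:ℝ)/3 < Real.log (3/2) := by
  have h : Real.exp (1/3) < 3/2 := by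
    by_contra h
    push_neg at h
    have h3 : ((3:ℝ)/2)^3 ≤ Real.exp (1/3) ^ 3 := by
      gcongr
    have he : Real.exp (1/3) ^ 3 = Real.exp 1 := by
      rw [← Real.exp_nat_mul]; norm_num
    have hd := Real.exp_one_lt_d9
    rw [he] at h3
    norm_num at h3
    linarith
  exact (Real.lt_log_iff_exp_lt (by norm_num : (0:ℝ) < 3/2)).mpr h

theorem psi_inv_bounds (Ψ ψinv : ℝ → ℝ)
    (hΨ : ∀ x, Ψ x = |x| * Real.log (1 + |x|))
    (hinv_nonneg : ∀ s, 0 ≤ s → 0 ≤ ψinv s)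
    (hinv : ∀ s, 0 ≤ s → Ψ (ψinv s) = s)
    (t : ℝ) (ht : 3 / 2 ≤ t) :
    (1 / 3) * (t / Real.log t) ≤ ψinv t ∧ ψinv t ≤ 2 * (t / Real.log t) := by
  have ht0 : (0:ℝ) < t := by linarith
  set L := Real.log t with hLdef
  have hL13 : (1:ℝ)/3 < L :=
    lt_of_lt_of_le log_three_halves (Real.log_le_log (by norm_num) ht)
  have hL0 : 0 < L := by linarith
  have ht00 : (0:ℝ) ≤ t := le_of_lt ht0
  have hinvt : Ψ (ψinv t) = t := hinv t ht00
  have hinvt0 : 0 ≤ ψinv t := hinv_nonneg t ht00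
  have habs : |ψinv t| = ψinv t := abs_of_nonneg hinvt0
  have hΨinv : ψinv t * Real.log (1 + ψinv t) = t := by
    have h := hΨ (ψinv t)
    rw [habs] at h
    rw [h] at hinvt
    exact hinvt
  constructor
  · -- lower bound
    set a := (1/3) * (t / L) with hadef
    have ha0 : 0 < a := by positivity
    have htL : t / L ≤ 3 * t := by
      rw [div_le_iff₀ hL0]; nlinarith
    have haT : a ≤ t := by rw [hadef]; linarith
    have hlog1 : Real.log (1 + t) ≤ 3 * L := by
      have h1 : Real.log (1 + t) ≤ Real.log (t ^ 3) := by
        apply Real.log_le_log (by linarith)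
        nlinarith [sq_nonneg (t - 1), sq_nonneg t]
      rw [Real.log_pow] at h1
      push_cast at h1
      linarith
    have hloga : Real.log (1 + a) ≤ 3 * L := by
      have := Real.log_le_log (by linarith : (0:ℝ) < 1 + a) (by linarith : 1 + a ≤ 1 + t)
      linarith
    have hΨa : a * Real.log (1 + a) ≤ t := by
      have h1 : a * Real.log (1 + a) ≤ a * (3 * L) :=
        mul_le_mul_of_nonneg_left hloga (le_of_lt ha0)
      have h2 : a * (3 * L) = t := by
        rw [hadef]; field_simp
      linarith
    by_contra hcon
    push_neg at hcon
    have := psi_mono_aux hinvt0 hcon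
    rw [hΨinv] at this
    linarith
  · -- upper bound
    set b := 2 * (t / L) with hbdef
    have hb0 : 0 < b := by positivity
    have hs0 : 0 < Real.sqrt t := Real.sqrt_pos.mpr ht0
    have hs2 : Real.sqrt t ^ 2 = t := Real.sq_sqrt ht00
    have hlogs : Real.log (Real.sqrt t) = L / 2 := by
      rw [Real.log_sqrt ht00]
    have hLle : L ≤ 2 * Real.sqrt t := by
      have := Real.log_le_sub_one_of_pos hs0
      rw [hlogs] at this
      linarith
    have hbs : Real.sqrt t ≤ b := by
      rw [hbdef, show (2:ℝ) * (t / L) = 2 * t / L by ring, le_div_iff₀ hL0]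
      nlinarith [mul_le_mul_of_nonneg_left hLle hs0.le, hs2]
    have hlogb : L / 2 ≤ Real.log (1 + b) := by
      have := Real.log_le_log hs0 (by linarith : Real.sqrt t ≤ 1 + b)
      rw [hlogs] at this
      linarith
    have hΨb : t ≤ b * Real.log (1 + b) := by
      have h1 : b * (L / 2) ≤ b * Real.log (1 + b) :=
        mul_le_mul_of_nonneg_left hlogb (le_of_lt hb0)
      have h2 : b * (L / 2) = t := by rw [hbdef]; field_simp
      linarith
    by_contra hcon
    push_neg at hcon
    have := psi_mono_aux (by linarith : (0:ℝ) ≤ b) hcon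
    rw [hΨinv] at this
    linarith
end

section
/- Let 0 ≤ γ < 1 and μ ∈ (0, 4 log 2). Let f = (f_i)_{i≥1} be a nonnegative, not identically zero sequence with M^exp := Σ_{i≥1} e^{μ i} f_i < ∞. Then M_γ ≥ M_1 / (2·((2/μ)·log(4 M^exp/(μ e M_1)))^{1−γ}), where M_α = Σ i^α f_i and M_1 > 0. -/
private lemma exp_moment_interpolation_alg (a b c : ℝ) (hb : b ≠ 0) (hc : c ≠ 0) :
    2 / b * (b * a / (4 * c)) * c = a / 2 := by
  field_simp; ring

set_option maxHeartbeats 1000000 in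
/-- Proposition 3.8 (exponential-moment interpolation).
Here `f i` stands for `f_{i+1}` of the paper. -/
theorem exp_moment_interpolation (f : ℕ → ℝ) (γ μ : ℝ)
    (hγ : 0 ≤ γ) (hγ1 : γ < 1) (hμ : 0 < μ) (hμ2 : μ < 4 * Real.log 2)
    (hf : ∀ i, 0 ≤ f i)
    (hMexp : Summable (fun i : ℕ => Real.exp (μ * ((i : ℝ) + 1)) * f i))
    (hM1 : Summable (fun i : ℕ => ((i : ℝ) + 1) * f i))
    (hMγ : Summable (fun i : ℕ => ((i : ℝ) + 1) ^ γ * f i))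
    (hM1pos : 0 < ∑' i : ℕ, ((i : ℝ) + 1) * f i) :
    (∑' i : ℕ, ((i : ℝ) + 1) * f i) /
        (2 * ((2 / μ) * Real.log (4 * (∑' i : ℕ, Real.exp (μ * ((i : ℝ) + 1)) * f i) /
          (μ * Real.exp 1 * ∑' i : ℕ, ((i : ℝ) + 1) * f i))) ^ (1 - γ))
      ≤ ∑' i : ℕ, ((i : ℝ) + 1) ^ γ * f i := by
  set M1 := ∑' i : ℕ, ((i : ℝ) + 1) * f i with hM1def
  set Me := ∑' i : ℕ, Real.exp (μ * ((i : ℝ) + 1)) * f i with hMedef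
  set Mg := ∑' i : ℕ, ((i : ℝ) + 1) ^ γ * f i with hMgdef
  have he : (0:ℝ) < Real.exp 1 := Real.exp_pos 1
  -- For all t : e * t ≤ exp t
  have hexp : ∀ t : ℝ, Real.exp 1 * t ≤ Real.exp t := by
    intro t
    have h1 := Real.add_one_le_exp (t - 1)
    have h2 : Real.exp 1 * (t - 1 + 1) ≤ Real.exp 1 * Real.exp (t - 1) :=
      mul_le_mul_of_nonneg_left h1 he.le
    calc Real.exp 1 * t = Real.exp 1 * (t - 1 + 1) := by ring
      _ ≤ Real.exp 1 * Real.exp (t - 1) := h2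
      _ = Real.exp t := by rw [← Real.exp_add]; ring_nf
  -- μ * e * M1 ≤ Me
  have hterm : ∀ i : ℕ, μ * Real.exp 1 * (((i:ℝ)+1) * f i)
      ≤ Real.exp (μ * ((i:ℝ)+1)) * f i := by
    intro i
    have h2 : μ * Real.exp 1 * ((i:ℝ)+1) ≤ Real.exp (μ*((i:ℝ)+1)) := by
      have := hexp (μ * ((i:ℝ)+1)); nlinarith
    calc μ * Real.exp 1 * (((i:ℝ)+1) * f i) = (μ * Real.exp 1 * ((i:ℝ)+1)) * f i := by ring
    _ ≤ _ := mul_le_mul_of_nonneg_right h2 (hf i)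
  have hMeM1 : μ * Real.exp 1 * M1 ≤ Me := by
    have h := Summable.tsum_le_tsum hterm (hM1.mul_left (μ * Real.exp 1)) hMexp
    rwa [tsum_mul_left] at h
  have hMepos : 0 < Me := lt_of_lt_of_le (by positivity) hMeM1
  set R := 4 * Me / (μ * Real.exp 1 * M1) with hRdef
  have hR4 : (4:ℝ) ≤ R := by
    rw [hRdef, le_div_iff₀ (by positivity)]
    nlinarith
  have hRpos : (0:ℝ) < R := by linarith
  have hlog2 : (0:ℝ) < Real.log 2 := Real.log_pos (by norm_num)
  have hlogR : 2 * Real.log 2 ≤ Real.log R := by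
    calc 2 * Real.log 2 = Real.log 4 := by
          rw [show (4:ℝ) = 2^2 by norm_num, Real.log_pow]; push_cast; ring
    _ ≤ Real.log R := Real.log_le_log (by norm_num) hR4
  set L := (2 / μ) * Real.log R with hLdef
  have hμLR : μ * L = 2 * Real.log R := by
    rw [hLdef]; field_simp
  have hL1 : 1 < L := by
    have h : μ * 1 < μ * L := by rw [hμLR]; nlinarith
    exact (mul_lt_mul_iff_right₀ hμ).1 h
  have hLpos : (0:ℝ) < L := by linarith
  have h1γ : 0 < 1 - γ := by linarith
  have hLg1 : (1:ℝ) ≤ L ^ (1 - γ) := Real.one_le_rpow hL1.le h1γ.le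
  have hLgpos : (0:ℝ) < L ^ (1 - γ) := by linarith
  -- exp(-(μ*L/2)) = 1/R
  have hμL : μ * L / 2 = Real.log R := by rw [hLdef]; field_simp
  have hexpL : Real.exp (-(μ * L / 2)) = 1 / R := by
    rw [Real.exp_neg, hμL, Real.exp_log hRpos, one_div]
  set C := (2 / (μ * Real.exp 1)) * Real.exp (-(μ * L / 2)) with hCdef
  have hCpos : 0 < C := by rw [hCdef]; positivity
  -- key per-term bound
  have hkey : ∀ i : ℕ, ((i:ℝ)+1) * f i
      ≤ L ^ (1-γ) * (((i:ℝ)+1) ^ γ * f i) + C * (Real.exp (μ * ((i:ℝ)+1)) * f i) := by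
    intro i
    set x : ℝ := (i:ℝ) + 1 with hxdef
    have hx : (0:ℝ) < x := by positivity
    have hC0 : 0 ≤ C * (Real.exp (μ * x) * f i) :=
      mul_nonneg hCpos.le (mul_nonneg (Real.exp_pos _).le (hf i))
    have hG0 : 0 ≤ L ^ (1-γ) * (x ^ γ * f i) :=
      mul_nonneg hLgpos.le (mul_nonneg (Real.rpow_nonneg hx.le γ) (hf i))
    rcases le_or_gt x L with hxL | hxL
    · have h1 : x ≤ x ^ γ * L ^ (1-γ) := by
        calc x = x ^ (γ + (1-γ)) := by rw [show γ + (1-γ) = 1 by ring, Real.rpow_one]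
        _ = x ^ γ * x ^ (1-γ) := Real.rpow_add hx γ (1-γ)
        _ ≤ x ^ γ * L ^ (1-γ) :=
            mul_le_mul_of_nonneg_left (Real.rpow_le_rpow hx.le hxL h1γ.le)
              (Real.rpow_nonneg hx.le γ)
      have : x * f i ≤ L ^ (1-γ) * (x ^ γ * f i) := by
        have := mul_le_mul_of_nonneg_right h1 (hf i); nlinarith
      linarith
    · have h1 : x ≤ C * Real.exp (μ * x) := by
        have hsplit : Real.exp (μ * x) = Real.exp (μ * x / 2) * Real.exp (μ * x / 2) := by
          rw [← Real.exp_add]; ring_nf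
        have h2 : Real.exp 1 * (μ * x / 2) ≤ Real.exp (μ * x / 2) := hexp _
        have h3 : Real.exp (μ * L / 2) ≤ Real.exp (μ * x / 2) := by
          apply Real.exp_le_exp.2; nlinarith
        have h4 : Real.exp (μ * L / 2) * (Real.exp 1 * (μ * x / 2)) ≤ Real.exp (μ * x) := by
          rw [hsplit]
          apply mul_le_mul h3 h2 (by positivity) (Real.exp_pos _).le
        have h5 : Real.exp (-(μ * L / 2)) * Real.exp (μ * L / 2) = 1 := by
          rw [← Real.exp_add]; ring_nf; exact Real.exp_zero
        have h6 : C * (Real.exp (μ * L / 2) * (Real.exp 1 * (μ * x / 2)))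
            ≤ C * Real.exp (μ * x) := mul_le_mul_of_nonneg_left h4 hCpos.le
        have h7 : C * (Real.exp (μ * L / 2) * (Real.exp 1 * (μ * x / 2))) = x := by
          rw [hCdef]
          have heq : (2 / (μ * Real.exp 1)) * Real.exp (-(μ * L / 2)) *
              (Real.exp (μ * L / 2) * (Real.exp 1 * (μ * x / 2)))
              = (Real.exp (-(μ * L / 2)) * Real.exp (μ * L / 2)) *
                ((2 / (μ * Real.exp 1)) * (Real.exp 1 * (μ * x / 2))) := by ring
          rw [heq, h5, one_mul]
          field_simp
        linarith
      have : x * f i ≤ C * (Real.exp (μ * x) * f i) := by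
        rw [← mul_assoc]
        exact mul_le_mul_of_nonneg_right h1 (hf i)
      linarith
  -- sum up
  have hsum : M1 ≤ L ^ (1-γ) * Mg + C * Me := by
    have hs : Summable (fun i : ℕ => L ^ (1-γ) * (((i:ℝ)+1) ^ γ * f i)
        + C * (Real.exp (μ * ((i:ℝ)+1)) * f i)) :=
      (hMγ.mul_left _).add (hMexp.mul_left _)
    have h := Summable.tsum_le_tsum hkey hM1 hs
    rwa [Summable.tsum_add (hMγ.mul_left _) (hMexp.mul_left _), tsum_mul_left, tsum_mul_left] at h
  have hCMe : C * Me = M1 / 2 := by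
    rw [hCdef, hexpL, hRdef, one_div_div]
    exact exp_moment_interpolation_alg M1 (μ * Real.exp 1) Me (by positivity) hMepos.ne'
  have hhalf : M1 / 2 ≤ L ^ (1-γ) * Mg := by linarith [hsum, hCMe.symm.le]
  have h2L : (0:ℝ) < 2 * L ^ (1-γ) := by linarith
  rw [div_le_iff₀ h2L]
  nlinarith [hhalf, hLgpos, hM1pos]
end

section
/- Let m ∈ ℕ, let (μ_i)_{1≤i≤m−1} and (ν_i)_{1≤i≤m−1} be positive reals, and let B := Σ_{i=1}^{m−1} μ_i · (Σ_{j=i}^{m−1} 1/ν_j). Then for every real sequence (f_i)_{1≤i≤m} with f_m = 0, Σ_{i=1}^{m−1} μ_i f_i² ≤ B · Σ_{i=1}^{m−1} ν_i (f_{i+1} − f_i)². -/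
/-! Since `f m = 0`, `f i` is minus the telescoping sum of the increments `f (j + 1) - f j` over
`i ≤ j < m`, so Cauchy–Schwarz with weights `ν j` bounds `f i ^ 2` by
`(∑_{j ≥ i} 1 / ν j) * ∑_{j ≥ i} ν j * (f (j + 1) - f j) ^ 2`. Enlarging the second sum to the
full range, multiplying by `μ i` and summing over `i` gives the inequality. -/

open Finset

theorem sq_sum_le_sum_inv_mul_sum_mul_sq {ι : Type*} (s : Finset ι) (ν x : ι → ℝ)
    (hν : ∀ j ∈ s, 0 < ν j) :
    (∑ j ∈ s, x j) ^ 2 ≤ (∑ j ∈ s, 1 / ν j) * ∑ j ∈ s, ν j * x j ^ 2 :=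
  sum_sq_le_sum_mul_sum_of_sq_le_mul s (fun j hj => (one_div_pos.2 (hν j hj)).le)
    (fun j hj => mul_nonneg (hν j hj).le (sq_nonneg _)) fun j hj => by
      rw [← mul_assoc, one_div_mul_cancel (hν j hj).ne', one_mul]

theorem sq_le_sum_inv_mul_sum_mul_sq_sub (f ν : ℕ → ℝ) {i m : ℕ} (him : i ≤ m) (hfm : f m = 0)
    (hν : ∀ j ∈ Ico i m, 0 < ν j) :
    f i ^ 2 ≤ (∑ j ∈ Ico i m, 1 / ν j) * ∑ j ∈ Ico i m, ν j * (f (j + 1) - f j) ^ 2 := by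
  have := sq_sum_le_sum_inv_mul_sum_mul_sq (Ico i m) ν (fun j => f (j + 1) - f j) hν
  rwa [sum_Ico_sub f him, hfm, zero_sub, neg_sq] at this

theorem finite_hardy_sufficient_general (m : ℕ) (μ ν f : ℕ → ℝ)
    (hμ : ∀ i ∈ Finset.Icc 1 (m - 1), 0 < μ i)
    (hν : ∀ i ∈ Finset.Icc 1 (m - 1), 0 < ν i)
    (hfm : f m = 0) :
    ∑ i ∈ Finset.Icc 1 (m - 1), μ i * f i ^ 2
      ≤ (∑ i ∈ Finset.Icc 1 (m - 1), μ i * ∑ j ∈ Finset.Icc i (m - 1), 1 / ν j) *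
        ∑ i ∈ Finset.Icc 1 (m - 1), ν i * (f (i + 1) - f i) ^ 2 := by
  rw [sum_mul]
  refine sum_le_sum fun i hi => ?_
  obtain ⟨hi1, him⟩ := mem_Icc.1 hi
  have hsub : Icc i (m - 1) ⊆ Icc 1 (m - 1) := Icc_subset_Icc_left hi1
  have hIco : Icc i (m - 1) = Ico i m := by
    ext j
    simp only [mem_Icc, mem_Ico]
    omega
  have hνi : ∀ j ∈ Icc i (m - 1), 0 < ν j := fun j hj => hν j (hsub hj)
  rw [mul_assoc]
  refine mul_le_mul_of_nonneg_left ?_ (hμ i hi).le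
  calc f i ^ 2
      ≤ (∑ j ∈ Icc i (m - 1), 1 / ν j) * ∑ j ∈ Icc i (m - 1), ν j * (f (j + 1) - f j) ^ 2 := by
        rw [hIco] at hνi ⊢
        exact sq_le_sum_inv_mul_sum_mul_sq_sub f ν (by omega) hfm hνi
    _ ≤ (∑ j ∈ Icc i (m - 1), 1 / ν j) * ∑ j ∈ Icc 1 (m - 1), ν j * (f (j + 1) - f j) ^ 2 := by
        refine mul_le_mul_of_nonneg_left ?_ (sum_nonneg fun j hj => (one_div_pos.2 (hνi j hj)).le)
        exact sum_le_sum_of_subset_of_nonneg hsub fun j hj _ =>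
          mul_nonneg (hν j hj).le (sq_nonneg _)

/-- Finite discrete Hardy-type inequality (sufficiency, Theorem 2.13). -/
theorem finite_hardy_sufficient (m : ℕ) (hm : 2 ≤ m) (μ ν f : ℕ → ℝ)
    (hμ : ∀ i ∈ Finset.Icc 1 (m - 1), 0 < μ i)
    (hν : ∀ i ∈ Finset.Icc 1 (m - 1), 0 < ν i)
    (hfm : f m = 0) :
    ∑ i ∈ Finset.Icc 1 (m - 1), μ i * f i ^ 2
      ≤ (∑ i ∈ Finset.Icc 1 (m - 1), μ i * ∑ j ∈ Finset.Icc i (m - 1), 1 / ν j) *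
        ∑ i ∈ Finset.Icc 1 (m - 1), ν i * (f (i + 1) - f i) ^ 2 :=
  finite_hardy_sufficient_general m μ ν f hμ hν hfm
end

section
/- Let m ≥ 2, (μ_i), (ν_i) positive for 1 ≤ i ≤ m−1. If there exists A > 0 such that Σ_{i=1}^{m−1} μ_i f_i² ≤ A·Σ_{i=1}^{m−1} ν_i (f_{i+1}−f_i)² for all sequences f with f_m = 0, then A ≥ sup_{k ≤ m−1} (Σ_{i=1}^{k} μ_i)·(Σ_{j=k}^{m−1} 1/ν_j). -/
/-!
Test the inequality against `f⁽ᵏ⁾ = hardyTest ν (m - 1) k`, which equals `σ k` on `[1, k]`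
and `σ i` on `[k, m - 1]`, where `σ j = ∑_{t=j}^{m-1} 1/ν t` (so `f⁽ᵏ⁾ m = 0`). Its increments
vanish below `k` and equal `-1/ν i` from `k` on, so the right-hand side is `A σ k`, while the
left-hand side is at least `(∑_{i ≤ k} μ i) σ k ²`. Dividing by `σ k > 0` gives the bound.
-/

open Finset

noncomputable def hardyTest (ν : ℕ → ℝ) (b k i : ℕ) : ℝ := ∑ t ∈ Icc (max i k) b, (ν t)⁻¹

section hardyTest

variable (ν : ℕ → ℝ) {b k i : ℕ}

lemma hardyTest_of_le (hik : i ≤ k) : hardyTest ν b k i = ∑ t ∈ Icc k b, (ν t)⁻¹ := by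
  rw [hardyTest, max_eq_right hik]

lemma hardyTest_eq_zero_of_lt (hbi : b < i) : hardyTest ν b k i = 0 := by
  rw [hardyTest, Icc_eq_empty_of_lt (hbi.trans_le (le_max_left i k)), sum_empty]

lemma hardyTest_sub_succ (hki : k ≤ i) (hib : i ≤ b) :
    hardyTest ν b k i - hardyTest ν b k (i + 1) = (ν i)⁻¹ := by
  rw [hardyTest, hardyTest, max_eq_left hki, max_eq_left (hki.trans (Nat.le_add_right i 1)),
    ← add_sum_Ioc_eq_sum_Icc hib, Icc_add_one_left_eq_Ioc, add_sub_cancel_right]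

lemma sum_mul_hardyTest_sub_sq {a : ℕ} (hak : a ≤ k) (hν : ∀ i ∈ Icc k b, ν i ≠ 0) :
    ∑ i ∈ Icc a b, ν i * (hardyTest ν b k (i + 1) - hardyTest ν b k i) ^ 2
      = ∑ t ∈ Icc k b, (ν t)⁻¹ := by
  rw [← sum_subset (Icc_subset_Icc hak le_rfl)]
  · refine sum_congr rfl fun i hi => ?_
    obtain ⟨hki, hib⟩ := mem_Icc.mp hi
    rw [← neg_sub, hardyTest_sub_succ ν hki hib, neg_sq]
    field_simp [hν i hi]
  · intro i hi hi_notMem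
    have hik : i < k := by
      by_contra! h
      exact hi_notMem (mem_Icc.mpr ⟨h, (mem_Icc.mp hi).2⟩)
    rw [hardyTest_of_le ν hik, hardyTest_of_le ν hik.le, sub_self, sq, mul_zero, mul_zero]

lemma sum_mul_le_sum_mul_hardyTest_sq (μ : ℕ → ℝ) {a : ℕ} (hkb : k ≤ b)
    (hμ : ∀ i ∈ Icc a b, 0 ≤ μ i) :
    (∑ i ∈ Icc a k, μ i) * (∑ t ∈ Icc k b, (ν t)⁻¹) ^ 2
      ≤ ∑ i ∈ Icc a b, μ i * hardyTest ν b k i ^ 2 :=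
  calc (∑ i ∈ Icc a k, μ i) * (∑ t ∈ Icc k b, (ν t)⁻¹) ^ 2
      = ∑ i ∈ Icc a k, μ i * hardyTest ν b k i ^ 2 := by
        rw [sum_mul]
        exact sum_congr rfl fun i hi => by rw [hardyTest_of_le ν (mem_Icc.mp hi).2]
    _ ≤ ∑ i ∈ Icc a b, μ i * hardyTest ν b k i ^ 2 :=
        sum_le_sum_of_subset_of_nonneg (Icc_subset_Icc le_rfl hkb)
          fun i hi _ => mul_nonneg (hμ i hi) (sq_nonneg _)

end hardyTest

theorem sum_mul_sum_inv_le_of_hardyTest (μ ν : ℕ → ℝ) {a b k : ℕ} {A : ℝ}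
    (hak : a ≤ k) (hkb : k ≤ b) (hμ : ∀ i ∈ Icc a b, 0 ≤ μ i) (hν : ∀ i ∈ Icc k b, 0 < ν i)
    (hineq : ∑ i ∈ Icc a b, μ i * hardyTest ν b k i ^ 2
      ≤ A * ∑ i ∈ Icc a b, ν i * (hardyTest ν b k (i + 1) - hardyTest ν b k i) ^ 2) :
    (∑ i ∈ Icc a k, μ i) * ∑ t ∈ Icc k b, (ν t)⁻¹ ≤ A := by
  have hσ : 0 < ∑ t ∈ Icc k b, (ν t)⁻¹ :=
    sum_pos (fun t ht => inv_pos.mpr (hν t ht)) (nonempty_Icc.mpr hkb)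
  rw [sum_mul_hardyTest_sub_sq ν hak fun i hi => (hν i hi).ne'] at hineq
  refine le_of_mul_le_mul_right ?_ hσ
  rw [mul_assoc, ← sq]
  exact (sum_mul_le_sum_mul_hardyTest_sq ν μ hkb hμ).trans hineq

theorem finite_hardy_necessary_general (m : ℕ) (μ ν : ℕ → ℝ) (A : ℝ)
    (hμ : ∀ i ∈ Finset.Icc 1 (m - 1), 0 < μ i)
    (hν : ∀ i ∈ Finset.Icc 1 (m - 1), 0 < ν i)
    (hineq : ∀ f : ℕ → ℝ, f m = 0 →
      ∑ i ∈ Finset.Icc 1 (m - 1), μ i * f i ^ 2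
        ≤ A * ∑ i ∈ Finset.Icc 1 (m - 1), ν i * (f (i + 1) - f i) ^ 2) :
    ∀ k ∈ Finset.Icc 1 (m - 1),
      (∑ i ∈ Finset.Icc 1 k, μ i) * (∑ j ∈ Finset.Icc k (m - 1), 1 / ν j) ≤ A := by
  intro k hk
  obtain ⟨hk1, hkm⟩ := mem_Icc.mp hk
  simpa only [one_div] using
    sum_mul_sum_inv_le_of_hardyTest μ ν hk1 hkm (fun i hi => (hμ i hi).le)
      (fun i hi => hν i (Icc_subset_Icc hk1 le_rfl hi))
      (hineq _ (hardyTest_eq_zero_of_lt ν (by omega)))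

/-- Finite discrete Hardy-type inequality (necessity, Theorem 2.13). -/
theorem finite_hardy_necessary (m : ℕ) (hm : 2 ≤ m) (μ ν : ℕ → ℝ) (A : ℝ)
    (hμ : ∀ i ∈ Finset.Icc 1 (m - 1), 0 < μ i)
    (hν : ∀ i ∈ Finset.Icc 1 (m - 1), 0 < ν i)
    (hA : 0 < A)
    (hineq : ∀ f : ℕ → ℝ, f m = 0 →
      ∑ i ∈ Finset.Icc 1 (m - 1), μ i * f i ^ 2
        ≤ A * ∑ i ∈ Finset.Icc 1 (m - 1), ν i * (f (i + 1) - f i) ^ 2) :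
    ∀ k ∈ Finset.Icc 1 (m - 1),
      (∑ i ∈ Finset.Icc 1 k, μ i) * (∑ j ∈ Finset.Icc k (m - 1), 1 / ν j) ≤ A :=
  finite_hardy_necessary_general m μ ν A hμ hν hineq
end

section
/- Let (Q_i)_{i≥1} be positive reals with Q_1 = 1, let z̄ > 0 satisfy Σ_i i Q_i z̄^i = ρ < ∞, and let c = (c_i)_{i≥1} be a nonnegative sequence with Σ_i i c_i = ρ. Then for every z > 0 with Σ_i Q_i z^i < ∞, H(c|Q_z̄) ≤ H(c|Q_z), where H(c|Q_z) := Σ_i c_i (log(c_i/(Q_i z^i)) − 1) + Σ_i Q_i z^i. -/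
/-- Lemma B.1: the equilibrium `Q_{z̄}` minimizes the relative free energy
among all `Q_z` for sequences with the given mass.
Here `Q i` and `c i` stand for `Q_{i+1}` and `c_{i+1}` of the paper, so that
`Q 0 = Q₁ = 1`. -/
theorem relative_free_energy_min (Q c : ℕ → ℝ) (zbar z ρ : ℝ)
    (hQ1 : Q 0 = 1) (hQ : ∀ i, 0 < Q i) (hc : ∀ i, 0 < c i)
    (hzbar : 0 < zbar) (hz : 0 < z)
    (hmassbar : Summable (fun i : ℕ => ((i : ℝ) + 1) * Q i * zbar ^ (i + 1)))
    (hmassbar_eq : ∑' i : ℕ, ((i : ℝ) + 1) * Q i * zbar ^ (i + 1) = ρ)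
    (hmassc : Summable (fun i : ℕ => ((i : ℝ) + 1) * c i))
    (hmassc_eq : ∑' i : ℕ, ((i : ℝ) + 1) * c i = ρ)
    (hQz : Summable (fun i : ℕ => Q i * z ^ (i + 1)))
    (hQzbar : Summable (fun i : ℕ => Q i * zbar ^ (i + 1)))
    (hHz : Summable (fun i : ℕ => c i * (Real.log (c i / (Q i * z ^ (i + 1))) - 1)))
    (hHzbar : Summable (fun i : ℕ => c i * (Real.log (c i / (Q i * zbar ^ (i + 1))) - 1))) :
    (∑' i : ℕ, c i * (Real.log (c i / (Q i * zbar ^ (i + 1))) - 1)) +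
        ∑' i : ℕ, Q i * zbar ^ (i + 1)
      ≤ (∑' i : ℕ, c i * (Real.log (c i / (Q i * z ^ (i + 1))) - 1)) +
        ∑' i : ℕ, Q i * z ^ (i + 1) := by
  set L : ℝ := Real.log z - Real.log zbar with hL
  -- pointwise identity relating the two entropy terms
  have hpt : ∀ i : ℕ, c i * (Real.log (c i / (Q i * zbar ^ (i + 1))) - 1)
      = c i * (Real.log (c i / (Q i * z ^ (i + 1))) - 1) + (((i : ℝ) + 1) * c i) * L := by
    intro i
    have hQi := hQ i
    have hci := hc i
    have h1 : Real.log (c i / (Q i * zbar ^ (i + 1)))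
        = Real.log (c i) - Real.log (Q i) - ((i : ℝ) + 1) * Real.log zbar := by
      rw [Real.log_div (ne_of_gt hci) (by positivity),
        Real.log_mul (ne_of_gt hQi) (by positivity), Real.log_pow]
      push_cast; ring
    have h2 : Real.log (c i / (Q i * z ^ (i + 1)))
        = Real.log (c i) - Real.log (Q i) - ((i : ℝ) + 1) * Real.log z := by
      rw [Real.log_div (ne_of_gt hci) (by positivity),
        Real.log_mul (ne_of_gt hQi) (by positivity), Real.log_pow]
      push_cast; ring
    rw [h1, h2, hL]; ring
  have hsum2 : Summable (fun i : ℕ => (((i : ℝ) + 1) * c i) * L) := hmassc.mul_right L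
  have hHsplit : (∑' i : ℕ, c i * (Real.log (c i / (Q i * zbar ^ (i + 1))) - 1))
      = (∑' i : ℕ, c i * (Real.log (c i / (Q i * z ^ (i + 1))) - 1)) + ρ * L := by
    rw [tsum_congr hpt, Summable.tsum_add hHz hsum2, tsum_mul_right, hmassc_eq]
  -- the nonnegative series
  set f : ℕ → ℝ := fun i =>
    Q i * z ^ (i + 1) - Q i * zbar ^ (i + 1) + (((i : ℝ) + 1) * Q i * zbar ^ (i + 1)) * (-L)
    with hf
  have hfsumm : Summable f := (hQz.sub hQzbar).add (hmassbar.mul_right (-L))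
  have hfnonneg : ∀ i, 0 ≤ f i := by
    intro i
    have hQi := hQ i
    have ha : (0 : ℝ) < zbar ^ (i + 1) := by positivity
    have hb : (0 : ℝ) < z ^ (i + 1) := by positivity
    have hlog : Real.log (z ^ (i + 1) / zbar ^ (i + 1))
        ≤ z ^ (i + 1) / zbar ^ (i + 1) - 1 :=
      Real.log_le_sub_one_of_pos (by positivity)
    rw [Real.log_div (ne_of_gt hb) (ne_of_gt ha), Real.log_pow, Real.log_pow] at hlog
    have hid : zbar ^ (i + 1) * (z ^ (i + 1) / zbar ^ (i + 1) - 1)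
        = z ^ (i + 1) - zbar ^ (i + 1) := by field_simp
    have hmul := mul_le_mul_of_nonneg_left hlog (le_of_lt ha)
    rw [hid] at hmul
    have : zbar ^ (i + 1) * (((i : ℝ) + 1) * L) ≤ z ^ (i + 1) - zbar ^ (i + 1) := by
      have : ((i + 1 : ℕ) : ℝ) * Real.log z - ((i + 1 : ℕ) : ℝ) * Real.log zbar
          = ((i : ℝ) + 1) * L := by push_cast [hL]; ring
      nlinarith [hmul]
    simp only [hf]
    nlinarith [hQi, this]
  have hfsum_nonneg : 0 ≤ ∑' i, f i := tsum_nonneg hfnonneg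
  have hfsum_eq : ∑' i, f i
      = (∑' i : ℕ, Q i * z ^ (i + 1)) - (∑' i : ℕ, Q i * zbar ^ (i + 1)) + ρ * (-L) := by
    rw [hf, Summable.tsum_add (hQz.sub hQzbar) (hmassbar.mul_right (-L)),
      Summable.tsum_sub hQz hQzbar, tsum_mul_right, hmassbar_eq]
  rw [hHsplit]
  have h := hfsum_eq ▸ hfsum_nonneg
  have hneg : ρ * -L = -(ρ * L) := by ring
  rw [hneg] at h
  clear_value L
  linarith
end

section
/- Let μ = (μ_i)_{i≥1} be a probability sequence with all μ_i > 0, and let f = (f_i) be a bounded real sequence. Define Ent_μ(g) = Σ_i μ_i g_i log(g_i / Σ_j μ_j g_j) for nonnegative g. Then lim_{|a|→∞} Ent_μ((f+a)²) = 2·(Σ_i μ_i f_i² − (Σ_i μ_i f_i)²), i.e. twice the variance of f under μ. -/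
/-!
With `S = ∑ μⱼ gⱼ` and `∑ μᵢ = 1`, the terms `μᵢ (gᵢ - S)` sum to zero, so the entropy is
`∑ μᵢ S · klFun (gᵢ / S)` with `klFun x = x log x + 1 - x ≥ 0`. For `g = (f + a)²` one has
`S = a² + 2ma + q` (`m`, `q` the first two moments of `f`) and `gᵢ / S = 1 + Dᵢ / S` with
`Dᵢ = 2 (fᵢ - m) a + fᵢ² - q`. The expansion `klFun (1 + δ) = δ² / 2 + O(δ³)` makes the `i`-th
term tend to `lim Dᵢ² / 2S = 2 (fᵢ - m)²`, while `klFun x ≤ (x - 1)²` bounds every term by a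
constant independent of `i`, so dominated convergence yields `2 ∑ μᵢ (fᵢ - m)² = 2 (q - m²)`.
Translating to `-∞` is translating `-f` to `+∞`.
-/

open Real Filter Topology InformationTheory

lemma abs_klFun_one_add_sub_sq_le {δ : ℝ} (hδ : |δ| ≤ 1 / 2) :
    |klFun (1 + δ) - δ ^ 2 / 2| ≤ 4 * |δ| ^ 3 := by
  have hlog := abs_log_sub_add_sum_range_le (x := -δ) (by rw [abs_neg]; linarith) 2
  simp only [Finset.sum_range_succ, Finset.sum_range_zero, abs_neg, sub_neg_eq_add] at hlog
  set r := log (1 + δ) - (δ - δ ^ 2 / 2)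
  have hr : |r| ≤ 2 * |δ| ^ 3 := by
    have h1 : |r| ≤ |δ| ^ 3 / (1 - |δ|) := by
      convert hlog using 2; norm_num; ring
    have h2 : |δ| ^ 3 / (1 - |δ|) ≤ 2 * |δ| ^ 3 := by
      rw [div_le_iff₀ (by linarith)]; nlinarith [pow_nonneg (abs_nonneg δ) 3]
    linarith
  have hid : klFun (1 + δ) - δ ^ 2 / 2 = (1 + δ) * r - δ ^ 3 / 2 := by
    simp only [klFun_apply, r]; ring
  rw [hid]
  have h1δ : |1 + δ| ≤ 3 / 2 := by
    calc |1 + δ| ≤ |1| + |δ| := abs_add_le _ _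
      _ ≤ 3 / 2 := by norm_num; linarith
  calc |(1 + δ) * r - δ ^ 3 / 2| ≤ |(1 + δ) * r| + |δ ^ 3 / 2| := abs_sub _ _
    _ = |1 + δ| * |r| + |δ| ^ 3 / 2 := by rw [abs_mul, abs_div, abs_pow, abs_two]
    _ ≤ 3 / 2 * (2 * |δ| ^ 3) + |δ| ^ 3 / 2 := by gcongr
    _ ≤ 4 * |δ| ^ 3 := by linarith [pow_nonneg (abs_nonneg δ) 3]

lemma klFun_le_sq_sub_one {x : ℝ} (hx : 0 ≤ x) : klFun x ≤ (x - 1) ^ 2 := by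
  rcases hx.eq_or_lt with rfl | hx
  · simp [klFun_zero]
  have := mul_le_mul_of_nonneg_left (log_le_sub_one_of_pos hx) hx.le
  rw [klFun_apply]; nlinarith

lemma tendsto_mul_klFun_one_add_div {α : Type*} {l : Filter α} {S D : α → ℝ} {L : ℝ}
    (hS : Tendsto S l atTop) (hD : Tendsto (fun x => D x ^ 2 / S x) l (𝓝 L)) :
    Tendsto (fun x => S x * klFun (1 + D x / S x)) l (𝓝 (L / 2)) := by
  have hSpos : ∀ᶠ x in l, 0 < S x := hS.eventually_gt_atTop 0
  have hsq : ∀ᶠ x in l, (D x / S x) ^ 2 = D x ^ 2 / S x * (S x)⁻¹ := by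
    filter_upwards with x
    rw [div_pow, sq (S x), div_mul_eq_div_div, div_eq_mul_inv (_ / _)]
  have hδ : Tendsto (fun x => D x / S x) l (𝓝 0) := by
    have h2 : Tendsto (fun x => (D x / S x) ^ 2) l (𝓝 0) := by
      simpa using (hD.mul hS.inv_tendsto_atTop).congr' (hsq.mono fun x hx => hx.symm)
    rw [tendsto_zero_iff_abs_tendsto_zero]
    have h := (continuous_sqrt.tendsto 0).comp h2
    rw [sqrt_zero] at h
    exact h.congr fun x => sqrt_sq_eq_abs _
  have herr : Tendsto (fun x => S x * (klFun (1 + D x / S x) - (D x / S x) ^ 2 / 2)) l (𝓝 0) := by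
    have hbound : Tendsto (fun x => 4 * (D x ^ 2 / S x) * |D x / S x|) l (𝓝 0) := by
      simpa using (hD.const_mul 4).mul hδ.abs
    refine squeeze_zero_norm' ?_ hbound
    filter_upwards [hSpos, hδ.eventually (eventually_abs_sub_lt 0 (by norm_num : (0:ℝ) < 1 / 2))]
      with x hSx hδx
    rw [sub_zero] at hδx
    calc ‖S x * (klFun (1 + D x / S x) - (D x / S x) ^ 2 / 2)‖
        ≤ S x * (4 * |D x / S x| ^ 3) := by
          rw [norm_mul, Real.norm_of_nonneg hSx.le]
          exact mul_le_mul_of_nonneg_left (abs_klFun_one_add_sub_sq_le hδx.le) hSx.le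
      _ = 4 * (D x ^ 2 / S x) * |D x / S x| := by
          rw [abs_div, abs_of_pos hSx, ← sq_abs (D x)]; field_simp
  convert (hD.div_const 2).add herr using 1
  · refine funext fun x => ?_
    rcases eq_or_ne (S x) 0 with hSx | hSx
    · simp [hSx]
    · field_simp; ring
  · simp

lemma tendsto_sq_linear_div_quadratic (α β γ κ : ℝ) :
    Tendsto (fun a : ℝ => (α * a + β) ^ 2 / (a ^ 2 + γ * a + κ)) atTop (𝓝 (α ^ 2)) := by
  have hF : ContinuousAt (fun x : ℝ => (α + β * x) ^ 2 / (1 + γ * x + κ * x ^ 2)) 0 :=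
    ContinuousAt.div (by fun_prop) (by fun_prop) (by simp)
  have h := hF.tendsto.comp tendsto_inv_atTop_zero
  simp only [mul_zero, add_zero, div_one, zero_pow two_ne_zero] at h
  refine h.congr' ?_
  filter_upwards [eventually_ne_atTop 0] with a ha
  simp only [Function.comp_apply]
  field_simp

lemma tendsto_quadratic_mul_klFun (t m q : ℝ) :
    Tendsto (fun a : ℝ => (a ^ 2 + 2 * m * a + q) * klFun ((t + a) ^ 2 / (a ^ 2 + 2 * m * a + q)))
      atTop (𝓝 (2 * (t - m) ^ 2)) := by
  have hS : Tendsto (fun a : ℝ => a ^ 2 + 2 * m * a + q) atTop atTop := by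
    have hsq : Tendsto (fun a : ℝ => (a + m) ^ 2) atTop atTop :=
      (tendsto_pow_atTop two_ne_zero).comp (tendsto_atTop_add_const_right _ m tendsto_id)
    exact (hsq.atTop_add (tendsto_const_nhds (x := q - m ^ 2))).congr fun a => by ring
  have h := tendsto_mul_klFun_one_add_div hS
    (tendsto_sq_linear_div_quadratic (2 * (t - m)) (t ^ 2 - q) (2 * m) q)
  rw [show 2 * (t - m) ^ 2 = (2 * (t - m)) ^ 2 / 2 by ring]
  refine h.congr' ?_
  filter_upwards [hS.eventually_gt_atTop 0] with a ha
  rw [one_add_div ha.ne']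
  congr 3
  ring

lemma abs_quadratic_mul_klFun_le {t m q a M : ℝ} (ht : |t| ≤ M) (hm : |m| ≤ M) (hq0 : 0 ≤ q)
    (hq : q ≤ M ^ 2) (ha : 4 * M ≤ a) (ha0 : 0 < a) :
    |(a ^ 2 + 2 * m * a + q) * klFun ((t + a) ^ 2 / (a ^ 2 + 2 * m * a + q))| ≤ 50 * M ^ 2 := by
  set S := a ^ 2 + 2 * m * a + q
  have hM : 0 ≤ M := (abs_nonneg t).trans ht
  have htM := abs_le.1 ht
  have hmM := abs_le.1 hm
  have hS : a ^ 2 / 2 ≤ S := by nlinarith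
  have hSpos : 0 < S := lt_of_lt_of_le (by positivity) hS
  have hD : |(t + a) ^ 2 - S| ≤ 5 * M * a := by
    rw [abs_le]; constructor <;> nlinarith
  have hk := klFun_nonneg (div_nonneg (sq_nonneg (t + a)) hSpos.le)
  rw [abs_of_nonneg (mul_nonneg hSpos.le hk)]
  calc S * klFun ((t + a) ^ 2 / S) ≤ S * ((t + a) ^ 2 / S - 1) ^ 2 :=
        mul_le_mul_of_nonneg_left (klFun_le_sq_sub_one (by positivity)) hSpos.le
    _ = ((t + a) ^ 2 - S) ^ 2 / S := by field_simp
    _ ≤ (5 * M * a) ^ 2 / (a ^ 2 / 2) :=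
        div_le_div₀ (sq_nonneg _) (sq_le_sq' (abs_le.1 hD).1 (abs_le.1 hD).2)
          (by positivity) hS
    _ = 50 * M ^ 2 := by field_simp; ring

noncomputable def ent {ι : Type*} (μ g : ι → ℝ) : ℝ :=
  ∑' i, μ i * g i * log (g i / ∑' j, μ j * g j)

section WeightedSum

variable {ι : Type*} {μ : ι → ℝ}

lemma summable_mul_of_abs_le {h : ι → ℝ} {B : ℝ} (hμ0 : ∀ i, 0 ≤ μ i) (hμ : Summable μ)
    (hh : ∀ i, |h i| ≤ B) : Summable fun i => μ i * h i :=
  (hμ.mul_right B).of_norm_bounded fun i => by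
    rw [norm_mul, norm_of_nonneg (hμ0 i)]
    exact mul_le_mul_of_nonneg_left (hh i) (hμ0 i)

lemma abs_tsum_mul_le {h : ι → ℝ} {B : ℝ} (hμ0 : ∀ i, 0 ≤ μ i) (hμ : Summable μ)
    (hμ1 : ∑' i, μ i = 1) (hh : ∀ i, |h i| ≤ B) : |∑' i, μ i * h i| ≤ B := by
  have hsum := summable_mul_of_abs_le hμ0 hμ hh
  have hμB : ∑' i, μ i * B = B := by rw [tsum_mul_right, hμ1, one_mul]
  have hμnegB : ∑' i, μ i * -B = -B := by rw [tsum_mul_right, hμ1, one_mul]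
  rw [abs_le]
  constructor
  · rw [← hμnegB]
    exact (hμ.mul_right _).tsum_le_tsum
      (fun i => mul_le_mul_of_nonneg_left (abs_le.1 (hh i)).1 (hμ0 i)) hsum
  · rw [← hμB]
    exact hsum.tsum_le_tsum
      (fun i => mul_le_mul_of_nonneg_left (abs_le.1 (hh i)).2 (hμ0 i)) (hμ.mul_right _)

lemma tsum_mul_add_sq {f : ι → ℝ} (hμ : Summable μ) (hf : Summable fun i => μ i * f i)
    (hf2 : Summable fun i => μ i * f i ^ 2) (c : ℝ) :
    ∑' i, μ i * (f i + c) ^ 2 =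
      ∑' i, μ i * f i ^ 2 + 2 * c * ∑' i, μ i * f i + c ^ 2 * ∑' i, μ i := by
  have h : (fun i => μ i * (f i + c) ^ 2) =
      fun i => μ i * f i ^ 2 + 2 * c * (μ i * f i) + c ^ 2 * μ i := by
    funext i; ring
  rw [h, (hf2.add (hf.mul_left _)).tsum_add (hμ.mul_left _), hf2.tsum_add (hf.mul_left _),
    tsum_mul_left, tsum_mul_left]

lemma ent_eq_tsum_klFun {g : ι → ℝ} (hμ : Summable μ) (hμ1 : ∑' i, μ i = 1)
    (hg : Summable fun i => μ i * g i) (hS : ∑' i, μ i * g i ≠ 0)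
    (hk : Summable fun i => μ i * ((∑' j, μ j * g j) * klFun (g i / ∑' j, μ j * g j))) :
    ent μ g = ∑' i, μ i * ((∑' j, μ j * g j) * klFun (g i / ∑' j, μ j * g j)) := by
  set S := ∑' j, μ j * g j
  have h (i : ι) :
      μ i * g i * log (g i / S) = μ i * (S * klFun (g i / S)) + (μ i * g i - S * μ i) := by
    rw [klFun_apply]; field_simp; ring
  rw [ent, tsum_congr h, hk.tsum_add (hg.sub (hμ.mul_left S)), hg.tsum_sub (hμ.mul_left S),
    tsum_mul_left, hμ1]
  ring

variable {f : ι → ℝ} {M : ℝ}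

theorem tendsto_ent_add_sq_atTop (hμ0 : ∀ i, 0 ≤ μ i) (hμ : Summable μ) (hμ1 : ∑' i, μ i = 1)
    (hf : ∀ i, |f i| ≤ M) :
    Tendsto (fun a : ℝ => ent μ fun i => (f i + a) ^ 2) atTop
      (𝓝 (2 * ((∑' i, μ i * f i ^ 2) - (∑' i, μ i * f i) ^ 2))) := by
  have hf2 (i : ι) : |f i ^ 2| ≤ M ^ 2 := by
    rw [abs_pow]; exact pow_le_pow_left₀ (abs_nonneg _) (hf i) 2
  have hsf := summable_mul_of_abs_le hμ0 hμ hf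
  have hsf2 := summable_mul_of_abs_le hμ0 hμ hf2
  set m := ∑' i, μ i * f i
  set q := ∑' i, μ i * f i ^ 2
  have hm : |m| ≤ M := abs_tsum_mul_le hμ0 hμ hμ1 hf
  have hq0 : 0 ≤ q := tsum_nonneg fun i => mul_nonneg (hμ0 i) (sq_nonneg _)
  have hq : q ≤ M ^ 2 := (le_abs_self q).trans (abs_tsum_mul_le hμ0 hμ hμ1 hf2)
  have hS (a : ℝ) : ∑' i, μ i * (f i + a) ^ 2 = a ^ 2 + 2 * m * a + q := by
    rw [tsum_mul_add_sq hμ hsf hsf2, hμ1]; ring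
  have hvar : ∑' i, μ i * (2 * (f i - m) ^ 2) = 2 * (q - m ^ 2) := by
    simp_rw [sub_eq_add_neg (f _), mul_left_comm (μ _), tsum_mul_left, tsum_mul_add_sq hμ hsf hsf2,
      hμ1]
    ring
  have hbound : ∀ᶠ a in atTop, ∀ i, ‖μ i * ((a ^ 2 + 2 * m * a + q) *
      klFun ((f i + a) ^ 2 / (a ^ 2 + 2 * m * a + q)))‖ ≤ μ i * (50 * M ^ 2) := by
    filter_upwards [eventually_ge_atTop (4 * M), eventually_gt_atTop 0] with a ha ha0 i
    rw [norm_mul, norm_of_nonneg (hμ0 i)]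
    exact mul_le_mul_of_nonneg_left (abs_quadratic_mul_klFun_le (hf i) hm hq0 hq ha ha0) (hμ0 i)
  have hlim := tendsto_tsum_of_dominated_convergence (hμ.mul_right _)
    (fun i => (tendsto_quadratic_mul_klFun (f i) m q).const_mul (μ i)) hbound
  rw [hvar] at hlim
  refine hlim.congr' ?_
  filter_upwards [hbound, eventually_ge_atTop (4 * M), eventually_gt_atTop 0] with a hba ha ha0
  have hSpos : 0 < a ^ 2 + 2 * m * a + q := by nlinarith [abs_le.1 hm]
  have hg (i : ι) : |(f i + a) ^ 2| ≤ (M + |a|) ^ 2 := by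
    rw [abs_pow]
    exact pow_le_pow_left₀ (abs_nonneg _) ((abs_add_le _ _).trans (by linarith [hf i])) 2
  rw [ent_eq_tsum_klFun hμ hμ1 (summable_mul_of_abs_le hμ0 hμ hg) (hS a ▸ hSpos.ne')
    (hS a ▸ (hμ.mul_right _).of_norm_bounded hba), hS a]

theorem tendsto_ent_add_sq_atBot (hμ0 : ∀ i, 0 ≤ μ i) (hμ : Summable μ) (hμ1 : ∑' i, μ i = 1)
    (hf : ∀ i, |f i| ≤ M) :
    Tendsto (fun a : ℝ => ent μ fun i => (f i + a) ^ 2) atBot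
      (𝓝 (2 * ((∑' i, μ i * f i ^ 2) - (∑' i, μ i * f i) ^ 2))) := by
  have h := (tendsto_ent_add_sq_atTop (f := fun i => -f i) hμ0 hμ hμ1
    fun i => (abs_neg (f i)).le.trans (hf i)).comp tendsto_neg_atBot_atTop
  simp only [Function.comp_def, neg_sq, ← neg_add, mul_neg, tsum_neg] at h
  exact h

end WeightedSum

/-- Lemma A.3: the entropy of large translations recovers twice the variance. -/
theorem ent_translation_variance (μ f : ℕ → ℝ) (M : ℝ)
    (hμpos : ∀ i, 0 < μ i) (hμsum : Summable μ) (hμ1 : ∑' i, μ i = 1)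
    (hbdd : ∀ i, |f i| ≤ M) :
    Filter.Tendsto
      (fun a : ℝ => ∑' i, μ i * (f i + a) ^ 2 *
        Real.log ((f i + a) ^ 2 / ∑' j, μ j * (f j + a) ^ 2))
      Filter.atTop
      (nhds (2 * ((∑' i, μ i * f i ^ 2) - (∑' i, μ i * f i) ^ 2))) ∧
    Filter.Tendsto
      (fun a : ℝ => ∑' i, μ i * (f i + a) ^ 2 *
        Real.log ((f i + a) ^ 2 / ∑' j, μ j * (f j + a) ^ 2))
      Filter.atBot
      (nhds (2 * ((∑' i, μ i * f i ^ 2) - (∑' i, μ i * f i) ^ 2))) :=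
  ⟨tendsto_ent_add_sq_atTop (fun i => (hμpos i).le) hμsum hμ1 hbdd,
    tendsto_ent_add_sq_atBot (fun i => (hμpos i).le) hμsum hμ1 hbdd⟩
end

section
/- Let μ be a probability sequence on ℕ (μ_i ≥ 0, Σ μ_i = 1). For a real sequence f with Σ μ_i f_i² < ∞, define Ent_μ(f²) = Σ_i μ_i f_i² log(f_i²/Σ_j μ_j f_j²) and L(f) = sup_{α∈ℝ} Ent_μ((f+α)²). Then Ent_μ(f²) ≤ L(f) ≤ Ent_μ(f²) + 2·Σ_i μ_i f_i². -/
/-!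
Put `N = ∑ μⱼ (fⱼ + α)²` and `s = (x + α)² / N`. The pointwise inequality
`(x + α)² log s ≤ α² (s - 1) + 2 x² + x² log ((s + 2) / 3)` is a quadratic form in `(α, x)`,
nonnegative because of the discriminant condition
`(log s)² ≤ (s - 1 - log s) (2 - log s + log ((s + 2) / 3))`. Weighting by `μ` and summing, the
`α²` terms cancel because `∑ μ s = 1`, and since also `∑ μ (s + 2) / 3 = 1`, the variational formula
for the entropy bounds the last term by `Ent_μ(f²)`.

Both sides of the discriminant condition agree to third order at `s = 1`, and the mixing constant `2`
is the only one for which this happens. For `s ≤ 1` the condition follows from `log x ≥ 1 - 1 / x`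
and the hyperbolic Cusa inequality `3 sinh t ≤ t (cosh t + 2)`; for `s ≥ 1` from
`log x ≥ 2 (x - 1) / (x + 1)` and the Taylor bound for `exp`.
-/

open Real
open scoped Nat

lemma three_mul_sinh_le_mul_cosh_add_two {t : ℝ} (ht : 0 ≤ t) :
    3 * sinh t ≤ t * (cosh t + 2) := by
  have hrhs : HasSum (fun n : ℕ => t * (t ^ (2 * n) / (2 * n)!) + if n = 0 then 2 * t else 0)
      (t * (cosh t + 2)) := by
    rw [mul_add, mul_comm t 2]
    exact ((hasSum_cosh t).mul_left t).add (hasSum_ite_eq 0 (2 * t))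
  refine hasSum_le (fun n => ?_) ((hasSum_sinh t).mul_left 3) hrhs
  rcases Nat.eq_zero_or_pos n with rfl | hn
  · simp only [mul_zero, zero_add, pow_one, pow_zero, Nat.factorial_zero, Nat.factorial_one,
      Nat.cast_one, div_one, if_pos]
    linarith
  · rw [if_neg hn.ne', add_zero, Nat.factorial_succ, Nat.cast_mul]
    have h3 : (3 : ℝ) ≤ ((2 * n + 1 : ℕ) : ℝ) := by exact_mod_cast (by omega : 3 ≤ 2 * n + 1)
    have hsplit : 3 * (t ^ (2 * n + 1) / (((2 * n + 1 : ℕ) : ℝ) * (2 * n)!)) =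
        3 / ((2 * n + 1 : ℕ) : ℝ) * (t * (t ^ (2 * n) / (2 * n)!)) := by
      rw [pow_succ]; field_simp
    rw [hsplit]
    exact mul_le_of_le_one_left (by positivity) ((div_le_one (by positivity)).2 h3)

lemma two_mul_le_log_one_add_sub_log_one_sub {t : ℝ} (h0 : 0 ≤ t) (h1 : t < 1) :
    2 * t ≤ log (1 + t) - log (1 - t) := by
  have := le_hasSum (hasSum_log_sub_log_of_abs_lt_one (abs_lt.2 ⟨by linarith, h1⟩)) 0
    (fun j _ => by positivity)
  simpa using this

lemma two_mul_sub_one_div_add_one_le_log {x : ℝ} (hx : 1 ≤ x) :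
    2 * (x - 1) / (x + 1) ≤ log x := by
  set t := (x - 1) / (x + 1) with ht
  have hx1 : 0 < x + 1 := by linarith
  have ht1 : t < 1 := by rw [ht, div_lt_one hx1]; linarith
  have hlog := two_mul_le_log_one_add_sub_log_one_sub (div_nonneg (by linarith) hx1.le) ht1
  have hratio : (1 + t) / (1 - t) = x := by rw [ht]; field_simp; ring
  rw [← log_div (by positivity) (by linarith), hratio] at hlog
  rwa [mul_div_assoc]

lemma quintic_le_exp_of_nonneg {x : ℝ} (hx : 0 ≤ x) :
    1 + x + x ^ 2 / 2 + x ^ 3 / 6 + x ^ 4 / 24 + x ^ 5 / 120 ≤ exp x := by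
  have := sum_le_exp_of_nonneg hx 6
  norm_num [Finset.sum_range_succ, Nat.factorial] at this
  linarith

lemma rothaus_discriminant_of_nonpos {L : ℝ} (hL : L ≤ 0) :
    L ^ 2 ≤ (exp L - 1 - L) * (2 - L + log ((exp L + 2) / 3)) := by
  set u := exp L with hu
  have hu0 : 0 < u := exp_pos L
  have hquad : 0 ≤ (3 - L) * u ^ 2 - 4 * L * u - (3 + L) := by
    have hcusa := three_mul_sinh_le_mul_cosh_add_two (neg_nonneg.2 hL)
    have hid : (3 - L) * u ^ 2 - 4 * L * u - (3 + L) =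
        2 * u * (-L * (cosh (-L) + 2) - 3 * sinh (-L)) := by
      rw [cosh_eq, sinh_eq, neg_neg, exp_neg]; field_simp; ring
    rw [hid]
    exact mul_nonneg (by positivity) (by linarith)
  have hlog : (u - 1) / (u + 2) ≤ log ((u + 2) / 3) := by
    have := one_sub_inv_le_log_of_pos (show 0 < (u + 2) / 3 by positivity)
    rwa [inv_div, one_sub_div (by positivity), show u + 2 - 3 = u - 1 by ring] at this
  have hgap : 0 ≤ u - 1 - L := by linarith [add_one_le_exp L]
  calc L ^ 2 ≤ (u - 1 - L) * (2 - L + (u - 1) / (u + 2)) := by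
        rw [← sub_nonneg]
        have : (u - 1 - L) * (2 - L + (u - 1) / (u + 2)) - L ^ 2 =
            ((3 - L) * u ^ 2 - 4 * L * u - (3 + L)) / (u + 2) := by
          field_simp; ring
        rw [this]; positivity
    _ ≤ (u - 1 - L) * (2 - L + log ((u + 2) / 3)) := by gcongr

lemma rothaus_discriminant_of_nonneg {L : ℝ} (hL : 0 ≤ L) :
    L ^ 2 ≤ (exp L - 1 - L) * (2 - L + log ((exp L + 2) / 3)) := by
  set u := exp L with hu
  have hT := quintic_le_exp_of_nonneg hL
  rw [← hu] at hT
  have hu1 : 1 ≤ u := one_le_exp hL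
  rcases le_or_gt L (5 / 2) with hL2 | hL2
  · set T := 1 + L + L ^ 2 / 2 + L ^ 3 / 6 + L ^ 4 / 24 + L ^ 5 / 120 with hTdef
    have hquadT : 0 ≤ (4 - L) * T ^ 2 + (4 - 8 * L) * T - (8 + 3 * L) := by
      have hL' : 0 ≤ 5 / 2 - L := by linarith
      have hpoly : 0 ≤ 1 / 6 + L / 10 + L ^ 2 / 90 + L ^ 3 / 360 - L ^ 4 / 240 - L ^ 5 / 576
          - L ^ 6 / 2400 - L ^ 7 / 14400 := by
        nlinarith [sq_nonneg L, sq_nonneg (L ^ 2), sq_nonneg (L ^ 3), mul_nonneg hL hL,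
          mul_nonneg (mul_nonneg hL hL) hL, sq_nonneg (L * (5 / 2 - L)),
          mul_nonneg (pow_nonneg hL 4) hL', mul_nonneg (pow_nonneg hL 5) hL']
      have hid : (4 - L) * T ^ 2 + (4 - 8 * L) * T - (8 + 3 * L) =
          L ^ 4 * (1 / 6 + L / 10 + L ^ 2 / 90 + L ^ 3 / 360 - L ^ 4 / 240 - L ^ 5 / 576
            - L ^ 6 / 2400 - L ^ 7 / 14400) := by
        rw [hTdef]; ring
      rw [hid]
      positivity
    have hquad : 0 ≤ (4 - L) * u ^ 2 + (4 - 8 * L) * u - (8 + 3 * L) := by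
      have hT1 : 1 + L + L ^ 2 / 2 ≤ T := by
        rw [hTdef]; nlinarith [pow_nonneg hL 3, pow_nonneg hL 4, pow_nonneg hL 5]
      have hfactor : 0 ≤ (4 - L) * (u + T) + (4 - 8 * L) := by nlinarith
      nlinarith [mul_nonneg (sub_nonneg.2 hT) hfactor]
    have hlog : 2 * (u - 1) / (u + 5) ≤ log ((u + 2) / 3) := by
      have := two_mul_sub_one_div_add_one_le_log (x := (u + 2) / 3) (by linarith)
      rwa [show 2 * ((u + 2) / 3 - 1) / ((u + 2) / 3 + 1) = 2 * (u - 1) / (u + 5) by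
        field_simp; ring] at this
    calc L ^ 2 ≤ (u - 1 - L) * (2 - L + 2 * (u - 1) / (u + 5)) := by
          rw [← sub_nonneg]
          have : (u - 1 - L) * (2 - L + 2 * (u - 1) / (u + 5)) - L ^ 2 =
              ((4 - L) * u ^ 2 + (4 - 8 * L) * u - (8 + 3 * L)) / (u + 5) := by
            have : u + 5 ≠ 0 := by linarith
            field_simp; ring
          rw [this]; exact div_nonneg hquad (by linarith)
      _ ≤ (u - 1 - L) * (2 - L + log ((u + 2) / 3)) := by
          gcongr
          linarith [add_one_le_exp L]
  · have hlog3 : log 3 < 23 / 20 := log_three_lt_d9.trans (by norm_num)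
    have hlog : L - 23 / 20 ≤ log ((u + 2) / 3) := by
      have : log (u / 3) ≤ log ((u + 2) / 3) := log_le_log (by positivity) (by linarith)
      rw [log_div (by positivity) (by norm_num), hu, log_exp] at this
      linarith
    have hL3 : 0 < L ^ 3 := by positivity
    calc L ^ 2 ≤ 17 / 20 * (u - 1 - L) := by nlinarith
      _ ≤ (u - 1 - L) * (2 - L + log ((u + 2) / 3)) := by
          rw [mul_comm]; gcongr
          · nlinarith
          · linarith

lemma rothaus_discriminant (L : ℝ) :
    L ^ 2 ≤ (exp L - 1 - L) * (2 - L + log ((exp L + 2) / 3)) :=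
  (le_total L 0).elim rothaus_discriminant_of_nonpos rothaus_discriminant_of_nonneg

lemma two_mul_mul_le_of_sq_le_mul {a b p q r : ℝ} (hp : 0 < p) (h : q ^ 2 ≤ p * r) :
    2 * a * b * q ≤ a ^ 2 * p + b ^ 2 * r := by
  nlinarith [sq_nonneg (a * p - b * q), mul_nonneg (sq_nonneg b) (sub_nonneg.2 h)]

lemma rothaus_pointwise_of_pos (x α : ℝ) {s : ℝ} (hs : 0 < s) :
    (x + α) ^ 2 * log s ≤ α ^ 2 * (s - 1) + 2 * x ^ 2 + x ^ 2 * log ((s + 2) / 3) := by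
  rcases eq_or_ne s 1 with rfl | hs1
  · have : ((1 : ℝ) + 2) / 3 = 1 := by norm_num
    simp only [this, log_one, mul_zero, sub_self, add_zero, zero_add]
    positivity
  have hgap : 0 < s - 1 - log s := by linarith [log_lt_sub_one_of_pos hs hs1]
  have hdisc := rothaus_discriminant (log s)
  rw [exp_log hs] at hdisc
  have := two_mul_mul_le_of_sq_le_mul (a := α) (b := x) hgap hdisc
  linear_combination this

lemma rothaus_pointwise (x α : ℝ) {N : ℝ} (hN : 0 < N) :
    (x + α) ^ 2 * log ((x + α) ^ 2 / N) ≤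
      α ^ 2 * ((x + α) ^ 2 / N - 1) + 2 * x ^ 2 + x ^ 2 * log (((x + α) ^ 2 / N + 2) / 3) := by
  rcases eq_or_ne (x + α) 0 with hy | hy
  · have hx : x ^ 2 = α ^ 2 := by rw [eq_neg_of_add_eq_zero_left hy]; ring
    have hlog : -(1 / 2) ≤ log (2 / 3) := by
      linarith [one_sub_inv_le_log_of_pos (show (0 : ℝ) < 2 / 3 by norm_num)]
    rw [hy, hx]
    simp only [ne_eq, OfNat.ofNat_ne_zero, not_false_eq_true, zero_pow, zero_div, log_zero,
      mul_zero, zero_add]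
    nlinarith [sq_nonneg α]
  · exact rothaus_pointwise_of_pos x α (by positivity)

noncomputable def entropy {ι : Type*} (μ g : ι → ℝ) : ℝ :=
  ∑' i, μ i * g i * log (g i / ∑' j, μ j * g j)

lemma mul_log_le_mul_log_div_add_sub {a b K : ℝ} (ha : 0 ≤ a) (hb : 0 < b) (hK : 0 < K) :
    a * log b ≤ a * log (a / K) + K * b - a := by
  rcases ha.eq_or_lt with rfl | ha
  · simp only [zero_mul, zero_div, log_zero, mul_zero, zero_add, sub_zero]
    positivity
  have := log_le_sub_one_of_pos (show 0 < K * b / a by positivity)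
  rw [log_div (by positivity) ha.ne', log_mul hK.ne' hb.ne'] at this
  rw [log_div ha.ne' hK.ne']
  have := mul_le_mul_of_nonneg_left this ha.le
  rw [show a * (K * b / a - 1) = K * b - a by field_simp] at this
  linear_combination this

section Entropy

variable {ι : Type*} {μ g : ι → ℝ}

theorem tsum_le_tsum_add_entropy {h A B : ι → ℝ} (hμ : ∀ i, 0 ≤ μ i) (hg : ∀ i, 0 ≤ g i)
    (hh : ∀ i, 0 < h i) (hgs : Summable fun i => μ i * g i)
    (hhs : Summable fun i => μ i * h i) (hh1 : ∑' i, μ i * h i = 1)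
    (hent : Summable fun i => μ i * g i * log (g i / ∑' j, μ j * g j))
    (hA : Summable A) (hB : Summable B) (hAB : ∀ i, A i ≤ B i + μ i * g i * log (h i)) :
    ∑' i, A i ≤ ∑' i, B i + entropy μ g := by
  set K := ∑' j, μ j * g j
  have hmass : ∀ i, 0 ≤ μ i * g i := fun i => mul_nonneg (hμ i) (hg i)
  have hK0 : 0 ≤ K := tsum_nonneg hmass
  have gibbs : ∀ i, μ i * g i * log (h i) ≤
      μ i * g i * log (g i / K) + (K * (μ i * h i) - μ i * g i) := by
    intro i
    rcases hK0.eq_or_lt with hK | hK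
    · have : μ i * g i = 0 :=
        le_antisymm (hK ▸ hgs.le_tsum i fun j _ => hmass j) (hmass i)
      simp [this, ← hK]
    · have := mul_le_mul_of_nonneg_left (mul_log_le_mul_log_div_add_sub (hg i) (hh i) hK) (hμ i)
      linear_combination this
  calc ∑' i, A i
      ≤ ∑' i, (B i + (μ i * g i * log (g i / K) + (K * (μ i * h i) - μ i * g i))) :=
        hA.tsum_le_tsum (fun i => (hAB i).trans (by linarith [gibbs i]))
          (hB.add (hent.add ((hhs.mul_left K).sub hgs)))
    _ = ∑' i, B i + (entropy μ g + (K * 1 - K)) := by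
        rw [hB.tsum_add (hent.add ((hhs.mul_left K).sub hgs)),
          hent.tsum_add ((hhs.mul_left K).sub hgs), (hhs.mul_left K).tsum_sub hgs,
          tsum_mul_left, hh1]
        rfl
    _ = ∑' i, B i + entropy μ g := by ring

theorem entropy_nonneg (hμ : ∀ i, 0 ≤ μ i) (hg : ∀ i, 0 ≤ g i) (hμs : Summable μ)
    (hμ1 : ∑' i, μ i = 1) (hgs : Summable fun i => μ i * g i)
    (hent : Summable fun i => μ i * g i * log (g i / ∑' j, μ j * g j)) :
    0 ≤ entropy μ g := by
  have := tsum_le_tsum_add_entropy (h := 1) (A := 0) (B := 0) hμ hg (fun _ => one_pos) hgs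
    (by simpa using hμs) (by simpa using hμ1) hent summable_zero summable_zero
    (fun i => by simp)
  simpa using this

theorem entropy_add_sq_le {f : ι → ℝ} (α : ℝ) (hμ : ∀ i, 0 ≤ μ i) (hμs : Summable μ)
    (hμ1 : ∑' i, μ i = 1) (hfs : Summable fun i => μ i * f i ^ 2)
    (hsq : Summable fun i => μ i * (f i + α) ^ 2)
    (hentf : Summable fun i => μ i * f i ^ 2 * log (f i ^ 2 / ∑' j, μ j * f j ^ 2))
    (hentα : Summable fun i => μ i * (f i + α) ^ 2 *
      log ((f i + α) ^ 2 / ∑' j, μ j * (f j + α) ^ 2)) :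
    entropy μ (fun i => (f i + α) ^ 2) ≤
      entropy μ (fun i => f i ^ 2) + 2 * ∑' i, μ i * f i ^ 2 := by
  have hent_nonneg : 0 ≤ entropy μ (fun i => f i ^ 2) :=
    entropy_nonneg hμ (fun i => sq_nonneg (f i)) hμs hμ1 hfs hentf
  have hK0 : 0 ≤ ∑' i, μ i * f i ^ 2 := tsum_nonneg fun i => by have := hμ i; positivity
  set N := ∑' j, μ j * (f j + α) ^ 2 with hN
  have hN0 : 0 ≤ N := tsum_nonneg fun i => by have := hμ i; positivity
  rcases hN0.eq_or_lt with hN0 | hN0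
  · have : entropy μ (fun i => (f i + α) ^ 2) = 0 := by simp [entropy, ← hN, ← hN0]
    linarith
  have hB : HasSum (fun i => α ^ 2 * (μ i * (f i + α) ^ 2 / N - μ i) + 2 * (μ i * f i ^ 2))
      (2 * ∑' i, μ i * f i ^ 2) := by
    have := (((hsq.hasSum.div_const N).sub hμs.hasSum).mul_left (α ^ 2)).add
      (hfs.hasSum.mul_left 2)
    rwa [← hN, div_self hN0.ne', hμ1, sub_self, mul_zero, zero_add] at this
  have hmix : HasSum (fun i => μ i * (((f i + α) ^ 2 / N + 2) / 3)) 1 := by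
    have := ((hsq.hasSum.div_const N).add (hμs.hasSum.mul_left 2)).div_const 3
    rw [← hN, div_self hN0.ne', hμ1] at this
    norm_num at this
    exact this.congr_fun fun i => by ring
  have key := tsum_le_tsum_add_entropy (g := fun i => f i ^ 2)
    (h := fun i => ((f i + α) ^ 2 / N + 2) / 3) hμ (fun i => sq_nonneg (f i))
    (fun i => by positivity) hfs hmix.summable hmix.tsum_eq hentf hentα hB.summable
    (fun i => by
      have := mul_le_mul_of_nonneg_left (rothaus_pointwise (f i) α hN0) (hμ i)
      linear_combination this)
  rw [hB.tsum_eq, add_comm] at key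
  exact key

end Entropy

/-- Lemma 2.5 (Rothaus-type): `Ent_μ(f²) ≤ L(f) ≤ Ent_μ(f²) + 2 Σ μᵢ fᵢ²`,
where `L(f) = sup_α Ent_μ((f+α)²)`. -/
theorem rothaus_lemma (μ f : ℕ → ℝ)
    (hμ : ∀ i, 0 ≤ μ i) (hμsum : Summable μ) (hμ1 : ∑' i, μ i = 1)
    (hfs : Summable (fun i => μ i * f i ^ 2))
    (hsq : ∀ α : ℝ, Summable (fun i => μ i * (f i + α) ^ 2))
    (hent : ∀ α : ℝ, Summable (fun i => μ i * (f i + α) ^ 2 *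
      Real.log ((f i + α) ^ 2 / ∑' j, μ j * (f j + α) ^ 2))) :
    (∑' i, μ i * f i ^ 2 * Real.log (f i ^ 2 / ∑' j, μ j * f j ^ 2)) ≤
      (⨆ α : ℝ, ∑' i, μ i * (f i + α) ^ 2 *
        Real.log ((f i + α) ^ 2 / ∑' j, μ j * (f j + α) ^ 2)) ∧
    (⨆ α : ℝ, ∑' i, μ i * (f i + α) ^ 2 *
        Real.log ((f i + α) ^ 2 / ∑' j, μ j * (f j + α) ^ 2)) ≤
      (∑' i, μ i * f i ^ 2 * Real.log (f i ^ 2 / ∑' j, μ j * f j ^ 2)) +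
        2 * ∑' i, μ i * f i ^ 2 := by
  have hentf := hent 0
  simp only [add_zero] at hentf
  have hbound (α : ℝ) := entropy_add_sq_le α hμ hμsum hμ1 hfs (hsq α) hentf (hent α)
  have hbdd := bddAbove_def.2 ⟨_, Set.forall_mem_range.2 hbound⟩
  refine ⟨?_, ciSup_le hbound⟩
  have := le_ciSup hbdd 0
  simp only [add_zero] at this
  exact this
end

section
/- Let η ∈ (0,1), and let (α_i)_{i≥1} be a non-increasing sequence of positive reals with α_1 = 1. Then for every k ≥ 1: k·α_k·η^k·Σ_{i=1}^k (1/(i·α_i))·η^{−i} ≤ 1 + sup_{k≥3} k(1 + log(k/2))·η^{k/2} + 2η/(1−η). -/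
/-!
Since `α` is non-increasing, each summand is at most `(k / i) η^(k - i)`. Split this sum at
`m = ⌊(k - 1) / 2⌋`. For `i ≤ m` we have `η^(k - i) ≤ η^(k / 2)`, and the harmonic sum up to `m`
is at most `1 + log (k / 2)`; this piece is empty unless `k ≥ 3`, where it is dominated by the
supremum. For `m < i < k` we have `k / i ≤ 2`, leaving a geometric series `∑ η^j ≤ η / (1 - η)`,
and the term `i = k` contributes `1`.
-/

open Finset

lemma sum_Icc_one_eq_add_sum_Ioc {M : Type*} [AddCommMonoid M] (f : ℕ → M) {m k : ℕ}
    (hmk : m ≤ k) : ∑ i ∈ Icc 1 k, f i = ∑ i ∈ Icc 1 m, f i + ∑ i ∈ Ioc m k, f i := by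
  rw [← Nat.zero_add 1, Icc_add_one_left_eq_Ioc, Icc_add_one_left_eq_Ioc,
    sum_Ioc_consecutive _ (Nat.zero_le m) hmk]

lemma sum_Icc_one_inv_le_one_add_log (m : ℕ) :
    ∑ i ∈ Icc 1 m, ((i : ℝ))⁻¹ ≤ 1 + Real.log m := by
  simpa [harmonic_eq_sum_Icc] using harmonic_le_one_add_log m

lemma sum_Ioo_pow_sub_le {η : ℝ} (hη0 : 0 ≤ η) (hη1 : η < 1) (m k : ℕ) :
    ∑ i ∈ Ioo m k, η ^ (k - i) ≤ η / (1 - η) := by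
  have hreflect : ∑ i ∈ Ioo m k, η ^ (k - i) = ∑ j ∈ Ico 1 (k - m), η ^ j := by
    refine sum_nbij' (k - ·) (k - ·) ?_ ?_ ?_ ?_ fun _ _ ↦ rfl <;>
      · intro i hi
        simp only [mem_Ioo, mem_Ico] at hi ⊢
        omega
  simpa [hreflect] using geom_sum_Ico_le_of_lt_one (m := 1) (n := k - m) hη0 hη1

lemma sum_Ioc_div_mul_pow_sub_le {η : ℝ} (hη0 : 0 ≤ η) (hη1 : η < 1) {m k : ℕ}
    (hmk : m < k) (hk : k ≤ 2 * (m + 1)) :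
    ∑ i ∈ Ioc m k, (k / i : ℝ) * η ^ (k - i) ≤ 1 + 2 * η / (1 - η) := by
  have hk0 : (k : ℝ) ≠ 0 := by exact_mod_cast (Nat.zero_lt_of_lt hmk).ne'
  rw [← Ioo_insert_right hmk, sum_insert (by simp), Nat.sub_self, pow_zero, div_self hk0,
    mul_one]
  have hratio : ∀ i ∈ Ioo m k, (k / i : ℝ) ≤ 2 := fun i hi ↦ by
    rw [mem_Ioo] at hi
    rw [div_le_iff₀ (by exact_mod_cast (Nat.zero_lt_of_lt hi.1))]
    exact_mod_cast (by omega : k ≤ 2 * i)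
  gcongr 1 + ?_
  calc ∑ i ∈ Ioo m k, (k / i : ℝ) * η ^ (k - i) ≤ ∑ i ∈ Ioo m k, 2 * η ^ (k - i) :=
        sum_le_sum fun i hi ↦ by gcongr; exact hratio i hi
    _ = 2 * ∑ i ∈ Ioo m k, η ^ (k - i) := (mul_sum ..).symm
    _ ≤ 2 * (η / (1 - η)) := by gcongr; exact sum_Ioo_pow_sub_le hη0 hη1 m k
    _ = 2 * η / (1 - η) := by ring

lemma sum_Icc_div_mul_pow_sub_le {η : ℝ} (hη0 : 0 < η) (hη1 : η ≤ 1) {m k : ℕ}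
    (hm : 1 ≤ m) (hmk : 2 * m ≤ k) :
    ∑ i ∈ Icc 1 m, (k / i : ℝ) * η ^ (k - i)
      ≤ k * (1 + Real.log ((k : ℝ) / 2)) * η ^ ((k : ℝ) / 2) := by
  have hpow : ∀ i ∈ Icc 1 m, η ^ (k - i) ≤ η ^ ((k : ℝ) / 2) := fun i hi ↦ by
    rw [mem_Icc] at hi
    rw [← Real.rpow_natCast, Nat.cast_sub (by omega)]
    apply Real.rpow_le_rpow_of_exponent_ge hη0 hη1
    have : (2 * i : ℝ) ≤ k := by exact_mod_cast (by omega : 2 * i ≤ k)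
    linarith
  have hlog : Real.log m ≤ Real.log ((k : ℝ) / 2) :=
    Real.log_le_log (by exact_mod_cast hm) (by
      rw [le_div_iff₀ two_pos]; exact_mod_cast (by omega : m * 2 ≤ k))
  calc ∑ i ∈ Icc 1 m, (k / i : ℝ) * η ^ (k - i)
      ≤ ∑ i ∈ Icc 1 m, (k / i : ℝ) * η ^ ((k : ℝ) / 2) :=
        sum_le_sum fun i hi ↦ by gcongr; exact hpow i hi
    _ = k * (∑ i ∈ Icc 1 m, ((i : ℝ))⁻¹) * η ^ ((k : ℝ) / 2) := by
        simp only [mul_sum, sum_mul, div_eq_mul_inv]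
    _ ≤ k * (1 + Real.log ((k : ℝ) / 2)) * η ^ ((k : ℝ) / 2) := by
        gcongr
        exact (sum_Icc_one_inv_le_one_add_log m).trans (by linarith)

lemma mul_sum_inv_pow_div_le_sum_div_mul_pow {η : ℝ} (hη : 0 < η) {α : ℕ → ℝ}
    (hαpos : ∀ i, 1 ≤ i → 0 < α i) (hα : AntitoneOn α (Set.Ici 1)) (k : ℕ) :
    (k : ℝ) * α k * η ^ k * ∑ i ∈ Icc 1 k, (η⁻¹) ^ i / ((i : ℝ) * α i)
      ≤ ∑ i ∈ Icc 1 k, (k / i : ℝ) * η ^ (k - i) := by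
  rw [mul_sum]
  refine sum_le_sum fun i hi ↦ ?_
  obtain ⟨h1i, hik⟩ := mem_Icc.mp hi
  have hαi : 0 < α i := hαpos i h1i
  have hi0 : (i : ℝ) ≠ 0 := by exact_mod_cast (Nat.one_le_iff_ne_zero.mp h1i)
  have hratio : α k / α i ≤ 1 :=
    div_le_one_of_le₀ (hα (Set.mem_Ici.mpr h1i) (Set.mem_Ici.mpr (h1i.trans hik)) hik) hαi.le
  calc (k : ℝ) * α k * η ^ k * ((η⁻¹) ^ i / ((i : ℝ) * α i))
      = (k / i : ℝ) * η ^ (k - i) * (α k / α i) := by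
        rw [pow_sub₀ η hη.ne' hik, inv_pow]
        field_simp
    _ ≤ (k / i : ℝ) * η ^ (k - i) := mul_le_of_le_one_right (by positivity) hratio

lemma bddAbove_range_mul_one_add_log_mul_rpow {η : ℝ} (hη : 0 < η) (hη1 : η < 1) :
    BddAbove (Set.range fun k : {k : ℕ // 3 ≤ k} ↦
      (k : ℝ) * (1 + Real.log ((k : ℝ) / 2)) * η ^ ((k : ℝ) / 2)) := by
  set r := η ^ (1 / 2 : ℝ)
  have hr : |r| < 1 := by
    rw [abs_of_nonneg (Real.rpow_nonneg hη.le _)]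
    exact Real.rpow_lt_one hη.le hη1 one_half_pos
  obtain ⟨B, hB⟩ := (tendsto_pow_const_mul_const_pow_of_abs_lt_one 2 hr).bddAbove_range
  refine ⟨B, ?_⟩
  rintro _ ⟨⟨k, -⟩, rfl⟩
  have hlog : 1 + Real.log ((k : ℝ) / 2) ≤ k := by
    linarith [Real.log_le_sub_one_of_pos (x := (k : ℝ) / 2) (by positivity), k.cast_nonneg (α := ℝ)]
  have hrk : r ^ k = η ^ ((k : ℝ) / 2) := by
    rw [← Real.rpow_natCast r, ← Real.rpow_mul hη.le, one_div_mul_eq_div]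
  calc (k : ℝ) * (1 + Real.log ((k : ℝ) / 2)) * η ^ ((k : ℝ) / 2) ≤ (k : ℝ) ^ 2 * r ^ k := by
        rw [hrk, sq]
        gcongr
    _ ≤ B := hB ⟨k, rfl⟩

lemma iSup_mul_one_add_log_mul_rpow_nonneg {η : ℝ} (hη : 0 ≤ η) :
    0 ≤ ⨆ k : {k : ℕ // 3 ≤ k}, (k : ℝ) * (1 + Real.log ((k : ℝ) / 2)) * η ^ ((k : ℝ) / 2) :=
  Real.iSup_nonneg fun ⟨k, hk⟩ ↦ by
    have hk2 : (1 : ℝ) ≤ k / 2 := by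
      rw [le_div_iff₀ two_pos]; exact_mod_cast (by omega : 2 ≤ k)
    have := Real.log_nonneg hk2
    exact mul_nonneg (mul_nonneg k.cast_nonneg (by linarith)) (Real.rpow_nonneg hη _)

theorem partial_sum_bound_general (η : ℝ) (hη : 0 < η) (hη1 : η < 1)
    (α : ℕ → ℝ)
    (hαpos : ∀ i, 1 ≤ i → 0 < α i)
    (hαmono : ∀ i, 1 ≤ i → α (i + 1) ≤ α i) :
    ∀ k : ℕ, 1 ≤ k →
      (k : ℝ) * α k * η ^ k * ∑ i ∈ Finset.Icc 1 k, (η⁻¹) ^ i / ((i : ℝ) * α i)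
        ≤ 1 + (⨆ k : {k : ℕ // 3 ≤ k},
            (k : ℝ) * (1 + Real.log ((k : ℝ) / 2)) * η ^ ((k : ℝ) / 2)) +
          2 * η / (1 - η) := by
  intro k hk
  set S := ⨆ k : {k : ℕ // 3 ≤ k},
    (k : ℝ) * (1 + Real.log ((k : ℝ) / 2)) * η ^ ((k : ℝ) / 2)
  have hS0 : 0 ≤ S := iSup_mul_one_add_log_mul_rpow_nonneg hη.le
  set m := (k - 1) / 2
  have hlow : ∑ i ∈ Icc 1 m, (k / i : ℝ) * η ^ (k - i) ≤ S := by
    rcases Nat.eq_zero_or_pos m with hm | hm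
    · simpa [hm] using hS0
    · exact (sum_Icc_div_mul_pow_sub_le hη hη1.le hm (by omega)).trans
        (le_ciSup (bddAbove_range_mul_one_add_log_mul_rpow hη hη1) ⟨k, by omega⟩)
  calc (k : ℝ) * α k * η ^ k * ∑ i ∈ Icc 1 k, (η⁻¹) ^ i / ((i : ℝ) * α i)
      ≤ ∑ i ∈ Icc 1 k, (k / i : ℝ) * η ^ (k - i) :=
        mul_sum_inv_pow_div_le_sum_div_mul_pow hη hαpos (antitoneOn_nat_Ici_of_succ_le hαmono) k
    _ = ∑ i ∈ Icc 1 m, (k / i : ℝ) * η ^ (k - i) + ∑ i ∈ Ioc m k, (k / i : ℝ) * η ^ (k - i) :=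
        sum_Icc_one_eq_add_sum_Ioc _ (by omega)
    _ ≤ S + (1 + 2 * η / (1 - η)) :=
        add_le_add hlow (sum_Ioc_div_mul_pow_sub_le hη.le hη1 (by omega) (by omega))
    _ = 1 + S + 2 * η / (1 - η) := by ring

/-- Bound appearing in the proof of Proposition 3.5. -/
theorem partial_sum_bound (η : ℝ) (hη : 0 < η) (hη1 : η < 1)
    (α : ℕ → ℝ) (hα1 : α 1 = 1)
    (hαpos : ∀ i, 1 ≤ i → 0 < α i)
    (hαmono : ∀ i, 1 ≤ i → α (i + 1) ≤ α i) :
    ∀ k : ℕ, 1 ≤ k →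
      (k : ℝ) * α k * η ^ k * ∑ i ∈ Finset.Icc 1 k, (η⁻¹) ^ i / ((i : ℝ) * α i)
        ≤ 1 + (⨆ k : {k : ℕ // 3 ≤ k},
            (k : ℝ) * (1 + Real.log ((k : ℝ) / 2)) * η ^ ((k : ℝ) / 2)) +
          2 * η / (1 - η) :=
  partial_sum_bound_general η hη hη1 α hαpos hαmono
end

section
/- Let (Q_i)_{i≥1} be positive reals, (a_i)_{i≥1} positive with inf_i a_i > 0, and suppose Q̄ := sup_i Q_i/Q_{i+1} < ∞ and Q̲ := inf_i Q_i/Q_{i+1} > 0, ā := sup_i a_i/a_{i+1} < ∞, a̲ := inf_i a_i/a_{i+1} > 0. Let c be a nonnegative sequence with c_1 < δ for some δ > 0 and Σ a_i c_i < ∞. Then D̄(c) := Σ_{i≥1} a_i Q_i (√(c_1 c_i/Q_i) − √(c_{i+1}/Q_{i+1}))² ≥ Q̲·a̲·(Σ_i a_i c_i − a_1 δ) − 2√δ·√(Q̄·ā)·(Σ_i a_i c_i). -/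
/-!
Put `m i = a i * c i` and `ρ i = (Q i / Q (i+1)) * (a i / a (i+1))`. Then the `i`-th term of
the dissipation is exactly `(√(c 0 m i) - √(ρ i m (i+1)))²`, whose expansion is
`c 0 m i + ρ i m (i+1) - 2 √(c 0 ρ i) √(m i m (i+1))`. Dropping the nonnegative first summand,
bounding `ρ i` below by `Q̲ a̲` and `√(c 0 ρ i)` above by `√δ √(Q̄ ā)`, and using
`2 √(m i m (i+1)) ≤ m i + m (i+1)` gives a termwise lower bound whose sum is
`Q̲ a̲ (Σ m - m 0) - √δ √(Q̄ ā) (2 Σ m - m 0)`; finally `m 0 ≤ a 0 δ`.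
-/

open Real

lemma mul_sqrt_sub_sqrt_sq {k : ℝ} (hk : 0 ≤ k) (x y : ℝ) :
    k * (√x - √y) ^ 2 = (√(k * x) - √(k * y)) ^ 2 := by
  rw [sqrt_mul hk, sqrt_mul hk]
  linear_combination (√x - √y) ^ 2 * (sq_sqrt hk).symm

lemma sqrt_sub_sqrt_sq_le_add {x y : ℝ} (hx : 0 ≤ x) (hy : 0 ≤ y) :
    (√x - √y) ^ 2 ≤ x + y := by
  nlinarith [sq_sqrt hx, sq_sqrt hy, sqrt_nonneg x, sqrt_nonneg y]

lemma sub_sqrt_mul_add_le_sqrt_sub_sqrt_sq {s ρ u v : ℝ}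
    (hs : 0 ≤ s) (hρ : 0 ≤ ρ) (hu : 0 ≤ u) (hv : 0 ≤ v) :
    ρ * v - √(s * ρ) * (u + v) ≤ (√(s * u) - √(ρ * v)) ^ 2 := by
  rw [sqrt_mul hs, sqrt_mul hρ, sqrt_mul hs]
  -- the difference of the two sides is `s u + √(sρ) (√u - √v)²`
  nlinarith [sq_sqrt hs, sq_sqrt hρ, sq_sqrt hu, sq_sqrt hv,
    mul_nonneg (sqrt_nonneg s) (sqrt_nonneg ρ), sq_nonneg (√u - √v),
    mul_nonneg (mul_nonneg (sqrt_nonneg s) (sqrt_nonneg ρ)) (sq_nonneg (√u - √v))]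

lemma le_sqrt_mul_sub_sqrt_mul_sq {s δ κ ρ R u v : ℝ}
    (hs : 0 ≤ s) (hsδ : s ≤ δ) (hκρ : κ ≤ ρ) (hρ : 0 ≤ ρ) (hρR : ρ ≤ R)
    (hu : 0 ≤ u) (hv : 0 ≤ v) :
    κ * v - √δ * √R * (u + v) ≤ (√(s * u) - √(ρ * v)) ^ 2 := by
  have hδ : 0 ≤ δ := hs.trans hsδ
  have hsqrt : √(s * ρ) ≤ √δ * √R := by
    rw [← sqrt_mul hδ]
    exact sqrt_le_sqrt (mul_le_mul hsδ hρR hρ hδ)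
  calc κ * v - √δ * √R * (u + v) ≤ ρ * v - √(s * ρ) * (u + v) := by gcongr
    _ ≤ _ := sub_sqrt_mul_add_le_sqrt_sub_sqrt_sq hs hρ hu hv

lemma dissipation_term_eq {qi qj ai aj : ℝ} (hqi : 0 < qi) (hqj : 0 < qj) (hai : 0 < ai)
    (haj : 0 < aj) (s ci cj : ℝ) :
    ai * qi * (√(s * ci / qi) - √(cj / qj)) ^ 2
      = (√(s * (ai * ci)) - √(qi / qj * (ai / aj) * (aj * cj))) ^ 2 := by
  rw [mul_sqrt_sub_sqrt_sq (by positivity)]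
  congr 3 <;> field_simp

lemma hasSum_shift_sub_mul_add {m : ℕ → ℝ} {S : ℝ} (hm : HasSum m S) (κ K : ℝ) :
    HasSum (fun i => κ * m (i + 1) - K * (m i + m (i + 1)))
      (κ * (S - m 0) - K * (2 * S - m 0)) := by
  have hshift : HasSum (fun i => m (i + 1)) (S - m 0) := by
    simpa using (hasSum_nat_add_iff' 1).mpr hm
  rw [show 2 * S - m 0 = S + (S - m 0) by ring]
  exact (hshift.mul_left κ).sub ((hm.add hshift).mul_left K)

theorem dissipation_lower_bound_small_c1_general (Q a c : ℕ → ℝ)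
    (Qbar Qlow abar alow δ : ℝ)
    (hQ : ∀ i, 0 < Q i) (ha : ∀ i, 0 < a i) (hc : ∀ i, 0 ≤ c i)
    (hQlow : 0 < Qlow) (hQratio : ∀ i, Qlow ≤ Q i / Q (i + 1) ∧ Q i / Q (i + 1) ≤ Qbar)
    (halow : 0 < alow) (haratio : ∀ i, alow ≤ a i / a (i + 1) ∧ a i / a (i + 1) ≤ abar)
    (hc1 : c 0 < δ)
    (hsum : Summable (fun i => a i * c i)) :
    Qlow * alow * ((∑' i, a i * c i) - a 0 * δ) -
        2 * Real.sqrt δ * Real.sqrt (Qbar * abar) * ∑' i, a i * c i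
      ≤ ∑' i, a i * Q i *
          (Real.sqrt (c 0 * c i / Q i) - Real.sqrt (c (i + 1) / Q (i + 1))) ^ 2 := by
  set m := fun i => a i * c i
  set ρ := fun i => Q i / Q (i + 1) * (a i / a (i + 1))
  have hm : ∀ i, 0 ≤ m i := fun i => mul_nonneg (ha i).le (hc i)
  have hρ : ∀ i, 0 ≤ ρ i ∧ Qlow * alow ≤ ρ i ∧ ρ i ≤ Qbar * abar := fun i => by
    have hQi := div_pos (hQ i) (hQ (i + 1))
    have hai := div_pos (ha i) (ha (i + 1))
    exact ⟨mul_nonneg hQi.le hai.le, mul_le_mul (hQratio i).1 (haratio i).1 halow.le hQi.le,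
      mul_le_mul (hQratio i).2 (haratio i).2 hai.le (hQi.le.trans (hQratio i).2)⟩
  have hterm : ∀ i, a i * Q i * (√(c 0 * c i / Q i) - √(c (i + 1) / Q (i + 1))) ^ 2
      = (√(c 0 * m i) - √(ρ i * m (i + 1))) ^ 2 := fun i =>
    dissipation_term_eq (hQ i) (hQ (i + 1)) (ha i) (ha (i + 1)) _ _ _
  simp only [hterm]
  have hD : Summable fun i => (√(c 0 * m i) - √(ρ i * m (i + 1))) ^ 2 := by
    refine .of_nonneg_of_le (fun _ => sq_nonneg _) (fun i => ?_)
      ((hsum.mul_left (c 0)).add ((summable_nat_add_iff 1).mpr hsum |>.mul_left (Qbar * abar)))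
    exact (sqrt_sub_sqrt_sq_le_add (mul_nonneg (hc 0) (hm i)) (mul_nonneg (hρ i).1 (hm _))).trans
      (add_le_add_right (mul_le_mul_of_nonneg_right (hρ i).2.2 (hm _)) _)
  calc _ ≤ Qlow * alow * ((∑' i, m i) - m 0) - √δ * √(Qbar * abar) * (2 * ∑' i, m i - m 0) := by
        have hm0 : m 0 ≤ a 0 * δ := mul_le_mul_of_nonneg_left hc1.le (ha 0).le
        nlinarith [hm 0, mul_pos hQlow halow, mul_nonneg (sqrt_nonneg δ) (sqrt_nonneg (Qbar * abar))]
    _ ≤ _ := hasSum_le (fun i => le_sqrt_mul_sub_sqrt_mul_sq (hc 0) hc1.le (hρ i).2.1 (hρ i).1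
        (hρ i).2.2 (hm i) (hm (i + 1))) (hasSum_shift_sub_mul_add hsum.hasSum _ _) hD.hasSum

/-- Lemma 3.12: lower bound on the lower free energy dissipation when `c₁` is
small. Here `Q i`, `a i`, `c i` stand for `Q_{i+1}`, `a_{i+1}`, `c_{i+1}` of
the paper, so that `c 0 = c₁`. -/
theorem dissipation_lower_bound_small_c1 (Q a c : ℕ → ℝ)
    (Qbar Qlow abar alow aInf δ : ℝ)
    (hQ : ∀ i, 0 < Q i) (ha : ∀ i, 0 < a i) (hc : ∀ i, 0 ≤ c i)
    (haInf : 0 < aInf) (haInfle : ∀ i, aInf ≤ a i)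
    (hQlow : 0 < Qlow) (hQratio : ∀ i, Qlow ≤ Q i / Q (i + 1) ∧ Q i / Q (i + 1) ≤ Qbar)
    (halow : 0 < alow) (haratio : ∀ i, alow ≤ a i / a (i + 1) ∧ a i / a (i + 1) ≤ abar)
    (hδ : 0 < δ) (hc1 : c 0 < δ)
    (hsum : Summable (fun i => a i * c i)) :
    Qlow * alow * ((∑' i, a i * c i) - a 0 * δ) -
        2 * Real.sqrt δ * Real.sqrt (Qbar * abar) * ∑' i, a i * c i
      ≤ ∑' i, a i * Q i *
          (Real.sqrt (c 0 * c i / Q i) - Real.sqrt (c (i + 1) / Q (i + 1))) ^ 2 :=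
  dissipation_lower_bound_small_c1_general Q a c Qbar Qlow abar alow δ hQ ha hc hQlow hQratio halow
    haratio hc1 hsum
end
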